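/- arXiv:2603.05239 — 3 statements merged into one kernel-verified Lean document; each statement's English description precedes it below -/
import Mathlib

section
/- Suppose (A,B,C,D) is a minimal realization. Then lim_{τ→∞} γ₋(T^τ) = sup { ζ ≥ 0 : there exists a symmetric positive semidefinite P ∈ ℝ^{n×n} such that the block matrix [[AᵀPA − P − CᵀC, AᵀPB − CᵀD], [BᵀPA − DᵀC, BᵀPB − DᵀD + ζ²I]] is negative semidefinite }. -/
open scoped ENNReal
open Filter Matrix Topology

noncomputable section

abbrev Evec (m : ℕ) := EuclideanSpace ℂ (Fin m)

/-- Action of a real matrix on a complex Euclidean vector. -/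
noncomputable def act {a b : ℕ} (M : Matrix (Fin a) (Fin b) ℝ) (v : Evec b) : Evec a :=
  Matrix.toEuclideanLin (M.map Complex.ofReal) v

/-- Output of the discrete-time system with zero initial state. -/
noncomputable def output {n m : ℕ} (A : Matrix (Fin n) (Fin n) ℝ) (B : Matrix (Fin n) (Fin m) ℝ)
    (C : Matrix (Fin m) (Fin n) ℝ) (D : Matrix (Fin m) (Fin m) ℝ)
    (u : ℕ → Evec m) (k : ℕ) : Evec m :=
  act D (u k) + ∑ i ∈ Finset.range k, act (C * A ^ (k - 1 - i) * B) (u i)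

/-- ℓ₂ norm of a sequence, valued in [0,∞]. -/
noncomputable def enorm2 {m : ℕ} (f : ℕ → Evec m) : ℝ≥0∞ :=
  (∑' k, (‖f k‖₊ : ℝ≥0∞) ^ 2) ^ (1/2 : ℝ)

noncomputable def norm2 {m : ℕ} (f : ℕ → Evec m) : ℝ := (enorm2 f).toReal

noncomputable def inner2 {m : ℕ} (f g : ℕ → Evec m) : ℂ := ∑' k, (inner ℂ (f k) (g k) : ℂ)

noncomputable def sangle {m : ℕ} (u y : ℕ → Evec m) : ℝ :=
  open scoped Classical in
  if y = 0 then 0 else Real.arccos ((inner2 y u).re / (norm2 y * norm2 u))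

noncomputable def srg {m : ℕ} (dom : Set (ℕ → Evec m))
    (T : (ℕ → Evec m) → (ℕ → Evec m)) : Set ℂ :=
  {w | ∃ u ∈ dom, u ≠ 0 ∧
    (w = ((norm2 (T u) / norm2 u : ℝ) : ℂ) * Complex.exp ((sangle u (T u) : ℂ) * Complex.I) ∨
     w = ((norm2 (T u) / norm2 u : ℝ) : ℂ) * Complex.exp (-(sangle u (T u) : ℂ) * Complex.I))}

noncomputable def maxGain {m : ℕ} (dom : Set (ℕ → Evec m))
    (T : (ℕ → Evec m) → (ℕ → Evec m)) : ℝ≥0∞ :=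
  ⨆ u ∈ {v ∈ dom | v ≠ 0}, enorm2 (T u) / enorm2 u

noncomputable def minGain {m : ℕ} (dom : Set (ℕ → Evec m))
    (T : (ℕ → Evec m) → (ℕ → Evec m)) : ℝ≥0∞ :=
  ⨅ u ∈ {v ∈ dom | v ≠ 0}, enorm2 (T u) / enorm2 u

/-- The subspace ℓ_{2,τ}: sequences vanishing strictly after time τ. -/
def ltwoTau (m τ : ℕ) : Set (ℕ → Evec m) := {u | ∀ k, τ < k → u k = 0}

/-- The truncated operator T^τ. -/
noncomputable def TtauMap {n m : ℕ} (A : Matrix (Fin n) (Fin n) ℝ) (B : Matrix (Fin n) (Fin m) ℝ)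
    (C : Matrix (Fin m) (Fin n) ℝ) (D : Matrix (Fin m) (Fin m) ℝ) (τ : ℕ)
    (u : ℕ → Evec m) (k : ℕ) : Evec m :=
  if k ≤ τ then output A B C D u k else 0

/-- Domain of the ℓ₂ operator T. -/
def domInf {n m : ℕ} (A : Matrix (Fin n) (Fin n) ℝ) (B : Matrix (Fin n) (Fin m) ℝ)
    (C : Matrix (Fin m) (Fin n) ℝ) (D : Matrix (Fin m) (Fin m) ℝ) : Set (ℕ → Evec m) :=
  {u | enorm2 u ≠ ⊤ ∧ enorm2 (output A B C D u) ≠ ⊤}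

/-- Limit of a sequence of subsets of a topological space. -/
def setLimit {X : Type*} [TopologicalSpace X] (S : ℕ → Set X) : Set X :=
  {x | ∃ z : ℕ → X, (∀ τ, z τ ∈ S τ) ∧ Tendsto z atTop (𝓝 x)}

/-- The (possibly unbounded) annulus centred at α with radii lo ≤ hi, as a subset of Ĉ. -/
def annulus (α : ℝ) (lo hi : ℝ≥0∞) : Set (OnePoint ℂ) :=
  {w | (w = OnePoint.infty ∧ hi = ⊤) ∨
    ∃ z : ℂ, w = (((α : ℂ) + z : ℂ) : OnePoint ℂ) ∧ lo ≤ (‖z‖₊ : ℝ≥0∞) ∧ (‖z‖₊ : ℝ≥0∞) ≤ hi}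

/-- A real matrix is negative semidefinite: symmetric and xᵀMx ≤ 0 for all x. -/
def IsNegSemidef {k : Type*} [Fintype k] (M : Matrix k k ℝ) : Prop :=
  M.IsSymm ∧ ∀ x : k → ℝ, x ⬝ᵥ M.mulVec x ≤ 0

/-- A real matrix is positive semidefinite: symmetric and xᵀMx ≥ 0 for all x. -/
def IsPosSemidefR {k : Type*} [Fintype k] (M : Matrix k k ℝ) : Prop :=
  M.IsSymm ∧ ∀ x : k → ℝ, 0 ≤ x ⬝ᵥ M.mulVec x

/-- A real matrix is negative definite. -/
def IsNegDef {k : Type*} [Fintype k] (M : Matrix k k ℝ) : Prop :=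
  M.IsSymm ∧ ∀ x : k → ℝ, x ≠ 0 → x ⬝ᵥ M.mulVec x < 0

/-- (A,B) is controllable: the controllability matrix has full rank n. -/
def Controllable {n m : ℕ} (A : Matrix (Fin n) (Fin n) ℝ) (B : Matrix (Fin n) (Fin m) ℝ) : Prop :=
  (Matrix.of fun i (p : Fin n × Fin m) => (A ^ (p.1 : ℕ) * B) i p.2).rank = n

/-- The observability matrix of depth l (rows C, CA, …, CA^{l-1}). -/
def obsMat {n m : ℕ} (A : Matrix (Fin n) (Fin n) ℝ) (C : Matrix (Fin m) (Fin n) ℝ) (l : ℕ) :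
    Matrix (Fin l × Fin m) (Fin n) ℝ :=
  Matrix.of fun p j => (C * A ^ (p.1 : ℕ)) p.2 j

/-- (A,C) is observable: the depth-n observability matrix has full rank n. -/
def Observable {n m : ℕ} (A : Matrix (Fin n) (Fin n) ℝ) (C : Matrix (Fin m) (Fin n) ℝ) : Prop :=
  (obsMat A C n).rank = n

/-- The lag of the system: smallest l ≥ 1 with full-rank observability matrix of depth l. -/
noncomputable def lag {n m : ℕ} (A : Matrix (Fin n) (Fin n) ℝ) (C : Matrix (Fin m) (Fin n) ℝ) : ℕ :=
  sInf {l | 1 ≤ l ∧ (obsMat A C l).rank = n}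

/-- The LMI matrix for the maximum gain. -/
def lmiMax {n m : ℕ} (A : Matrix (Fin n) (Fin n) ℝ) (B : Matrix (Fin n) (Fin m) ℝ)
    (C : Matrix (Fin m) (Fin n) ℝ) (D : Matrix (Fin m) (Fin m) ℝ)
    (P : Matrix (Fin n) (Fin n) ℝ) (γ : ℝ) : Matrix (Fin n ⊕ Fin m) (Fin n ⊕ Fin m) ℝ :=
  Matrix.fromBlocks (Aᵀ * P * A - P + Cᵀ * C) (Aᵀ * P * B + Cᵀ * D)
    (Bᵀ * P * A + Dᵀ * C) (Bᵀ * P * B + Dᵀ * D - γ ^ 2 • (1 : Matrix (Fin m) (Fin m) ℝ))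

/-- The LMI matrix for the minimum gain. -/
def lmiMin {n m : ℕ} (A : Matrix (Fin n) (Fin n) ℝ) (B : Matrix (Fin n) (Fin m) ℝ)
    (C : Matrix (Fin m) (Fin n) ℝ) (D : Matrix (Fin m) (Fin m) ℝ)
    (P : Matrix (Fin n) (Fin n) ℝ) (ζ : ℝ) : Matrix (Fin n ⊕ Fin m) (Fin n ⊕ Fin m) ℝ :=
  Matrix.fromBlocks (Aᵀ * P * A - P - Cᵀ * C) (Aᵀ * P * B - Cᵀ * D)
    (Bᵀ * P * A - Dᵀ * C) (Bᵀ * P * B - Dᵀ * D + ζ ^ 2 • (1 : Matrix (Fin m) (Fin m) ℝ))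

/-- Persistency of excitation of order L of the input data (u_k)_{k=0}^{N-1}. -/
def PersistentlyExciting (m N L : ℕ) (u : ℕ → Fin m → ℝ) : Prop :=
  (Matrix.of fun (p : Fin L × Fin m) (j : Fin (N - L + 1)) => u ((p.1 : ℕ) + (j : ℕ)) p.2).rank
    = m * L

/-- (u,y) is an input-output trajectory of (A,B,C,D) of length N. -/
def IsTrajectory {n m : ℕ} (A : Matrix (Fin n) (Fin n) ℝ) (B : Matrix (Fin n) (Fin m) ℝ)
    (C : Matrix (Fin m) (Fin n) ℝ) (D : Matrix (Fin m) (Fin m) ℝ) (N : ℕ)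
    (u y : ℕ → Fin m → ℝ) : Prop :=
  ∃ x : ℕ → Fin n → ℝ, ∀ k < N,
    x (k + 1) = A.mulVec (x k) + B.mulVec (u k) ∧ y k = C.mulVec (x k) + D.mulVec (u k)

/-- Index type for the extended state ξ (u-block followed by y-block). -/
abbrev rindex (l m : ℕ) := (Fin l × Fin m) ⊕ (Fin l × Fin m)

/-- The extended state ξ_k = (u_{k-l}, …, u_{k-1}, y_{k-l}, …, y_{k-1}). -/
def xi {m : ℕ} (l : ℕ) (u y : ℕ → Fin m → ℝ) (k : ℕ) : rindex l m → ℝ :=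
  Sum.elim (fun p => u (k - l + (p.1 : ℕ)) p.2) (fun p => y (k - l + (p.1 : ℕ)) p.2)

def XiMat {m : ℕ} (l N : ℕ) (u y : ℕ → Fin m → ℝ) : Matrix (rindex l m) (Fin (N - l)) ℝ :=
  Matrix.of fun r j => xi l u y (l + (j : ℕ)) r

def XiPlus {m : ℕ} (l N : ℕ) (u y : ℕ → Fin m → ℝ) : Matrix (rindex l m) (Fin (N - l)) ℝ :=
  Matrix.of fun r j => xi l u y (l + 1 + (j : ℕ)) r

def UXi (m l N : ℕ) (u : ℕ → Fin m → ℝ) : Matrix (Fin m) (Fin (N - l)) ℝ :=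
  Matrix.of fun a j => u (l + (j : ℕ)) a

/-! For real inputs, `ENNReal.ofReal ζ ≤ γ₋(T^τ)` says exactly that the supply
`∑ k ≤ τ, (‖y k‖² - ζ² ‖u k‖²)` is nonnegative for every input supported on `[0, τ]`; complex
inputs split into real and imaginary parts. A solution `P ⪰ 0` of the LMI is a storage function
for this supply, so telescoping gives the bound for every `τ`. Conversely, if the supply is
nonnegative on every horizon, the least supply needed to steer `0` to `x` in `N ≥ n` steps
(possible by controllability) is a quadratic form `xᵀ P_N x ≥ 0`, being the minimum of a positive
semidefinite form over the fibres of a linear surjection. It is nonincreasing in `N`, and its limit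
satisfies the one-step dissipation inequality, which is the LMI. -/

lemma ENNReal.le_of_forall_ofReal_le {a b : ℝ≥0∞}
    (h : ∀ ζ : ℝ, 0 ≤ ζ → ENNReal.ofReal ζ ≤ a → ENNReal.ofReal ζ ≤ b) : a ≤ b :=
  ENNReal.le_of_forall_nnreal_lt fun r hr => by
    simpa using h r r.2 (by simpa using hr.le)

lemma ENNReal.eq_sSup_of_ofReal_le_iff {a : ℝ≥0∞} {p : ℝ → Prop}
    (h : ∀ ζ : ℝ, 0 ≤ ζ → (ENNReal.ofReal ζ ≤ a ↔ p ζ)) :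
    a = sSup {g | ∃ ζ : ℝ, 0 ≤ ζ ∧ g = ENNReal.ofReal ζ ∧ p ζ} := by
  refine le_antisymm (ENNReal.le_of_forall_ofReal_le fun ζ hζ hle => ?_) (sSup_le ?_)
  · exact le_sSup ⟨ζ, hζ, rfl, (h ζ hζ).mp hle⟩
  · rintro _ ⟨ζ, hζ, rfl, hp⟩
    exact (h ζ hζ).mpr hp

lemma ENNReal.ofReal_le_ofReal_sqrt_div_iff {ζ U Y : ℝ} (hζ : 0 ≤ ζ) (hU : 0 < U) (hY : 0 ≤ Y) :
    ENNReal.ofReal ζ ≤ ENNReal.ofReal √Y / ENNReal.ofReal √U ↔ ζ ^ 2 * U ≤ Y := by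
  rw [← ENNReal.ofReal_div_of_pos (Real.sqrt_pos.2 hU), ENNReal.ofReal_le_ofReal_iff
    (by positivity), le_div_iff₀ (Real.sqrt_pos.2 hU), ← Real.sqrt_le_sqrt_iff hY,
    Real.sqrt_mul (sq_nonneg _), Real.sqrt_sq hζ]

theorem exists_linearMap_minNorm_on_fibers {V E X : Type*} [AddCommGroup V] [Module ℝ V]
    [FiniteDimensional ℝ V] [NormedAddCommGroup E] [InnerProductSpace ℝ E] [AddCommGroup X]
    [Module ℝ X] (F : V →ₗ[ℝ] E) {L : V →ₗ[ℝ] X} (hL : Function.Surjective L) :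
    ∃ G : X →ₗ[ℝ] E, (∀ w, ‖G (L w)‖ ≤ ‖F w‖) ∧ ∀ x, ∃ w, L w = x ∧ F w = G x := by
  obtain ⟨σ, hσ⟩ := L.exists_rightInverse_of_surjective (LinearMap.range_eq_top.mpr hL)
  have hLσ : ∀ x, L (σ x) = x := fun x => congrArg (· x) hσ
  set S := (LinearMap.ker L).map F
  refine ⟨Sᗮ.starProjection.toLinearMap ∘ₗ F ∘ₗ σ, fun w => ?_, fun x => ?_⟩
  · have hFw : F w = F (σ (L w)) + F (w - σ (L w)) := by rw [← map_add]; abel_nf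
    have hS : F (w - σ (L w)) ∈ S := ⟨_, by simp [hLσ], rfl⟩
    calc ‖Sᗮ.starProjection (F (σ (L w)))‖ = ‖Sᗮ.starProjection (F w)‖ := by
          rw [hFw, map_add, (Sᗮ.starProjection_apply_eq_zero_iff).mpr
            (S.le_orthogonal_orthogonal hS), add_zero]
      _ ≤ ‖F w‖ := Sᗮ.norm_starProjection_apply_le _
  · obtain ⟨k, hk, hFk⟩ : S.starProjection (F (σ x)) ∈ S := S.starProjection_apply_mem _
    refine ⟨σ x - k, by simp [hLσ, LinearMap.mem_ker.mp hk], ?_⟩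
    simp [hFk]

lemma EuclideanSpace.real_norm_toLp_sq {ι : Type*} [Fintype ι] (v : ι → ℝ) :
    ‖WithLp.toLp 2 v‖ ^ 2 = v ⬝ᵥ v := by
  rw [← real_inner_self_eq_norm_sq, EuclideanSpace.inner_toLp_toLp, star_trivial]

theorem Matrix.PosSemidef.exists_isSymm_min_on_fibers {ι κ : Type*} [Fintype ι] [Fintype κ]
    [DecidableEq ι] [DecidableEq κ] {Q : Matrix ι ι ℝ} (hQ : Q.PosSemidef) {L : Matrix κ ι ℝ}
    (hL : Function.Surjective L.mulVec) :
    ∃ P : Matrix κ κ ℝ, P.IsSymm ∧ (∀ w, (L *ᵥ w) ⬝ᵥ P *ᵥ (L *ᵥ w) ≤ w ⬝ᵥ Q *ᵥ w) ∧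
      ∀ x, ∃ w, L *ᵥ w = x ∧ w ⬝ᵥ Q *ᵥ w = x ⬝ᵥ P *ᵥ x := by
  obtain ⟨R, rfl⟩ : ∃ R : Matrix ι ι ℝ, Q = Rᵀ * R := by
    open scoped MatrixOrder Matrix.Norms.L2Operator in
    simpa [star_eq_conjTranspose] using CStarAlgebra.nonneg_iff_eq_star_mul_self.mp hQ.nonneg
  let toE := (WithLp.linearEquiv 2 ℝ (ι → ℝ)).symm.toLinearMap
  obtain ⟨G, hGle, hGeq⟩ := exists_linearMap_minNorm_on_fibers (toE ∘ₗ R.mulVecLin)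
    (L := L.mulVecLin) hL
  let M := LinearMap.toMatrix' ((WithLp.linearEquiv 2 ℝ (ι → ℝ)).toLinearMap ∘ₗ G)
  have hM : ∀ x, x ⬝ᵥ (Mᵀ * M) *ᵥ x = ‖G x‖ ^ 2 := fun x => by
    rw [← mulVec_mulVec, dotProduct_transpose_mulVec, LinearMap.toMatrix'_mulVec,
      ← EuclideanSpace.real_norm_toLp_sq]
    rfl
  have hQw : ∀ w, w ⬝ᵥ (Rᵀ * R) *ᵥ w = ‖toE (R *ᵥ w)‖ ^ 2 := fun w => by
    rw [← mulVec_mulVec, dotProduct_transpose_mulVec, ← EuclideanSpace.real_norm_toLp_sq]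
    rfl
  refine ⟨Mᵀ * M, by simp [IsSymm], fun w => ?_, fun x => ?_⟩
  · rw [hM, hQw]
    gcongr
    exact hGle w
  · obtain ⟨w, hLw, hFw⟩ := hGeq x
    exact ⟨w, hLw, by rw [hM, hQw]; exact congrArg (‖·‖ ^ 2) hFw⟩

theorem Matrix.exists_isSymm_of_tendsto_quadForm {κ : Type*} [Fintype κ] [DecidableEq κ]
    {P : ℕ → Matrix κ κ ℝ} (hP : ∀ j, (P j).IsSymm) {q : (κ → ℝ) → ℝ}
    (hq : ∀ x, Tendsto (fun j => x ⬝ᵥ P j *ᵥ x) atTop (𝓝 (q x))) :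
    ∃ P' : Matrix κ κ ℝ, P'.IsSymm ∧ ∀ x, x ⬝ᵥ P' *ᵥ x = q x := by
  let e : κ → κ → ℝ := fun a => Pi.single a 1
  have hpolar : ∀ (M : Matrix κ κ ℝ), M.IsSymm → ∀ a b,
      M a b = ((e a + e b) ⬝ᵥ M *ᵥ (e a + e b) - e a ⬝ᵥ M *ᵥ e a - e b ⬝ᵥ M *ᵥ e b) / 2 := by
    intro M hM a b
    have hba : M b a = M a b := by rw [← hM.apply a b]
    simp [e, mulVec_add, dotProduct_add, add_dotProduct, hba]
    ring
  let P' : Matrix κ κ ℝ := .of fun a b => (q (e a + e b) - q (e a) - q (e b)) / 2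
  have hlim : Tendsto P atTop (𝓝 P') := tendsto_pi_nhds.2 fun a => tendsto_pi_nhds.2 fun b => by
    simp_rw [hpolar _ (hP _) a b]
    exact (((hq _).sub (hq _)).sub (hq _)).div_const 2
  refine ⟨P', ?_, fun x => tendsto_nhds_unique ?_ (hq x)⟩
  · ext a b
    simp [P', add_comm (e a)]
    ring
  · exact ((continuous_const.dotProduct (continuous_id.matrix_mulVec continuous_const)).tendsto
      P').comp hlim

namespace Evec

def mapₗ {k : ℕ} (φ : ℂ →ₗ[ℝ] ℝ) : Evec k →ₗ[ℝ] (Fin k → ℝ) where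
  toFun v a := φ (v a)
  map_add' v w := by ext a; simp
  map_smul' c v := by ext a; exact φ.map_smul c (v a)

@[simp]
lemma mapₗ_apply {k : ℕ} (φ : ℂ →ₗ[ℝ] ℝ) (v : Evec k) (a : Fin k) : mapₗ φ v a = φ (v a) := rfl

lemma mapₗ_act {a b : ℕ} (φ : ℂ →ₗ[ℝ] ℝ) (M : Matrix (Fin a) (Fin b) ℝ) (v : Evec b) :
    mapₗ φ (act M v) = M *ᵥ mapₗ φ v := by
  ext i
  simp [act, Matrix.toLpLin_apply, mulVec, dotProduct, ← Complex.real_smul]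

lemma norm_sq_eq {k : ℕ} (v : Evec k) :
    ‖v‖ ^ 2 = mapₗ Complex.reLm v ⬝ᵥ mapₗ Complex.reLm v
      + mapₗ Complex.imLm v ⬝ᵥ mapₗ Complex.imLm v := by
  rw [EuclideanSpace.norm_sq_eq, dotProduct, dotProduct, ← Finset.sum_add_distrib]
  refine Finset.sum_congr rfl fun a _ => ?_
  simp [Complex.sq_norm, Complex.normSq_apply]

end Evec

lemma enorm2_eq_ofReal_sqrt {m K : ℕ} {f : ℕ → Evec m} (hf : ∀ k, K < k → f k = 0) :
    enorm2 f = ENNReal.ofReal √(∑ k ∈ Finset.range (K + 1), ‖f k‖ ^ 2) := by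
  rw [enorm2, tsum_eq_sum (s := Finset.range (K + 1)) fun k hk => by
      simp [hf k (by simpa using hk)],
    Real.sqrt_eq_rpow, ← ENNReal.ofReal_rpow_of_nonneg (by positivity) (by norm_num),
    ENNReal.ofReal_sum_of_nonneg fun k _ => by positivity]
  simp_rw [ENNReal.ofReal_pow (norm_nonneg _), ofReal_norm, enorm_eq_nnnorm]

lemma sum_range_norm_sq_pos {m K : ℕ} {f : ℕ → Evec m} (hf : ∀ k, K < k → f k = 0) (hf0 : f ≠ 0) :
    0 < ∑ k ∈ Finset.range (K + 1), ‖f k‖ ^ 2 := by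
  obtain ⟨k, hk⟩ := Function.ne_iff.mp hf0
  have hkK : k < K + 1 := by by_contra h; exact hk (hf k (by omega))
  exact Finset.sum_pos' (fun _ _ => by positivity)
    ⟨k, Finset.mem_range.mpr hkK, pow_pos (norm_pos_iff.mpr hk) 2⟩

namespace LTI

variable {n m : ℕ} (A : Matrix (Fin n) (Fin n) ℝ) (B : Matrix (Fin n) (Fin m) ℝ)
  (C : Matrix (Fin m) (Fin n) ℝ) (D : Matrix (Fin m) (Fin m) ℝ)

def state : ℕ → (ℕ → Fin m → ℝ) →ₗ[ℝ] (Fin n → ℝ)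
  | 0 => 0
  | k + 1 => A.mulVecLin ∘ₗ state k + B.mulVecLin ∘ₗ LinearMap.proj k

def out (k : ℕ) : (ℕ → Fin m → ℝ) →ₗ[ℝ] (Fin m → ℝ) :=
  C.mulVecLin ∘ₗ state A B k + D.mulVecLin ∘ₗ LinearMap.proj k

@[simp]
lemma state_zero (u : ℕ → Fin m → ℝ) : state A B 0 u = 0 := rfl

@[simp]
lemma state_succ (k : ℕ) (u : ℕ → Fin m → ℝ) :
    state A B (k + 1) u = A *ᵥ state A B k u + B *ᵥ u k := rfl

lemma out_apply (k : ℕ) (u : ℕ → Fin m → ℝ) : out A B C D k u = C *ᵥ state A B k u + D *ᵥ u k :=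
  rfl

lemma state_eq_sum (k : ℕ) (u : ℕ → Fin m → ℝ) :
    state A B k u = ∑ i ∈ Finset.range k, (A ^ (k - 1 - i) * B) *ᵥ u i := by
  induction k with
  | zero => simp
  | succ k ih =>
    rw [state_succ, ih, Finset.sum_range_succ, mulVec_sum, Nat.add_sub_cancel, Nat.sub_self,
      pow_zero, Matrix.one_mul]
    congr 1
    refine Finset.sum_congr rfl fun i hi => ?_
    rw [mulVec_mulVec, ← Matrix.mul_assoc, ← pow_succ',
      show k - 1 - i + 1 = k - i by have := Finset.mem_range.mp hi; omega]

lemma mapₗ_output (φ : ℂ →ₗ[ℝ] ℝ) (u : ℕ → Evec m) (k : ℕ) :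
    Evec.mapₗ φ (output A B C D u k) = out A B C D k (fun j => Evec.mapₗ φ (u j)) := by
  simp only [output, map_add, map_sum, Evec.mapₗ_act, out_apply, state_eq_sum, mulVec_sum,
    mulVec_mulVec, Matrix.mul_assoc]
  exact add_comm _ _

def inputsBefore (N : ℕ) : Submodule ℝ (ℕ → Fin m → ℝ) where
  carrier := {u | ∀ k, N ≤ k → u k = 0}
  add_mem' hu hv k hk := by simp [hu k hk, hv k hk]
  zero_mem' _ _ := rfl
  smul_mem' c u hu k hk := by simp [hu k hk]

def supply (ζ : ℝ) (N : ℕ) (u : ℕ → Fin m → ℝ) : ℝ :=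
  ∑ k ∈ Finset.range N, (out A B C D k u ⬝ᵥ out A B C D k u - ζ ^ 2 * (u k ⬝ᵥ u k))

def SupplyNonneg (ζ : ℝ) (N : ℕ) : Prop :=
  ∀ u ∈ inputsBefore N, 0 ≤ supply A B C D ζ N u

lemma supply_zero_input (ζ : ℝ) (N : ℕ) : supply A B C D ζ N 0 = 0 := by
  simp [supply]

lemma sum_norm_sq_TtauMap_sub (ζ : ℝ) (T : ℕ) (u : ℕ → Evec m) :
    ∑ k ∈ Finset.range (T + 1), ‖TtauMap A B C D T u k‖ ^ 2
        - ζ ^ 2 * ∑ k ∈ Finset.range (T + 1), ‖u k‖ ^ 2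
      = supply A B C D ζ (T + 1) (fun j => Evec.mapₗ Complex.reLm (u j))
        + supply A B C D ζ (T + 1) (fun j => Evec.mapₗ Complex.imLm (u j)) := by
  rw [supply, supply, ← Finset.sum_add_distrib, Finset.mul_sum, ← Finset.sum_sub_distrib]
  refine Finset.sum_congr rfl fun k hk => ?_
  rw [TtauMap, if_pos (Nat.lt_succ_iff.mp (Finset.mem_range.mp hk)), Evec.norm_sq_eq,
    Evec.norm_sq_eq, mapₗ_output, mapₗ_output]
  ring

theorem ofReal_le_minGain_iff {ζ : ℝ} (hζ : 0 ≤ ζ) (T : ℕ) :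
    ENNReal.ofReal ζ ≤ minGain (ltwoTau m T) (TtauMap A B C D T)
      ↔ SupplyNonneg A B C D ζ (T + 1) := by
  have hTu : ∀ u, ∀ k, T < k → TtauMap A B C D T u k = 0 := fun u k hk => if_neg (by omega)
  have hratio : ∀ u ∈ ltwoTau m T, u ≠ 0 →
      (ENNReal.ofReal ζ ≤ enorm2 (TtauMap A B C D T u) / enorm2 u ↔
        0 ≤ supply A B C D ζ (T + 1) (fun j => Evec.mapₗ Complex.reLm (u j))
          + supply A B C D ζ (T + 1) (fun j => Evec.mapₗ Complex.imLm (u j))) := by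
    intro u hu hu0
    rw [enorm2_eq_ofReal_sqrt (hTu u), enorm2_eq_ofReal_sqrt hu,
      ENNReal.ofReal_le_ofReal_sqrt_div_iff hζ (sum_range_norm_sq_pos hu hu0) (by positivity),
      ← sum_norm_sq_TtauMap_sub, sub_nonneg]
  have hpart : ∀ φ : ℂ →ₗ[ℝ] ℝ, ∀ u ∈ ltwoTau m T,
      (fun j => Evec.mapₗ φ (u j)) ∈ inputsBefore (T + 1) := fun φ u hu k hk => by
    simp [hu k (by omega)]
  simp only [minGain, le_iInf_iff, Set.mem_ofPred_eq, and_imp]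
  constructor
  · intro h v hv
    by_cases hv0 : v = 0
    · rw [hv0, supply_zero_input]
    set u : ℕ → Evec m := fun j => WithLp.toLp 2 fun a => (v j a : ℂ)
    have hu : u ∈ ltwoTau m T := fun k hk => by ext; simp [u, hv k (by omega)]
    have hu0 : u ≠ 0 := fun h0 => hv0 (funext fun j => funext fun a => by
      simpa [u] using congrFun (congrArg WithLp.ofLp (congrFun h0 j)) a)
    have hre : (fun j => Evec.mapₗ Complex.reLm (u j)) = v := by ext; simp [u]
    have him : (fun j => Evec.mapₗ Complex.imLm (u j)) = 0 := by ext; simp [u]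
    simpa [hre, him, supply_zero_input] using (hratio u hu hu0).mp (h u hu hu0)
  · intro h u hu hu0
    exact (hratio u hu hu0).mpr (add_nonneg (h _ (hpart _ u hu)) (h _ (hpart _ u hu)))

def DissipationIneq (ζ : ℝ) (P : Matrix (Fin n) (Fin n) ℝ) : Prop :=
  ∀ x v, (A *ᵥ x + B *ᵥ v) ⬝ᵥ P *ᵥ (A *ᵥ x + B *ᵥ v)
    ≤ x ⬝ᵥ P *ᵥ x + ((C *ᵥ x + D *ᵥ v) ⬝ᵥ (C *ᵥ x + D *ᵥ v) - ζ ^ 2 * (v ⬝ᵥ v))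

lemma sumElim_dotProduct_lmiMin_mulVec (P : Matrix (Fin n) (Fin n) ℝ) (ζ : ℝ)
    (x : Fin n → ℝ) (v : Fin m → ℝ) :
    Sum.elim x v ⬝ᵥ lmiMin A B C D P ζ *ᵥ Sum.elim x v
      = (A *ᵥ x + B *ᵥ v) ⬝ᵥ P *ᵥ (A *ᵥ x + B *ᵥ v) - x ⬝ᵥ P *ᵥ x
        - ((C *ᵥ x + D *ᵥ v) ⬝ᵥ (C *ᵥ x + D *ᵥ v) - ζ ^ 2 * (v ⬝ᵥ v)) := by
  simp only [lmiMin, fromBlocks_mulVec, sumElim_dotProduct_sumElim, add_mulVec, sub_mulVec,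
    smul_mulVec, one_mulVec, dotProduct_add, dotProduct_sub, dotProduct_smul, smul_eq_mul,
    ← mulVec_mulVec, dotProduct_transpose_mulVec, mulVec_add, add_dotProduct,
    Sum.elim_comp_inl, Sum.elim_comp_inr]
  simp only [dotProduct_comm (P *ᵥ _), dotProduct_comm (D *ᵥ v) (C *ᵥ x)]
  ring

lemma isSymm_lmiMin {P : Matrix (Fin n) (Fin n) ℝ} (hP : P.IsSymm) (ζ : ℝ) :
    (lmiMin A B C D P ζ).IsSymm := by
  have hPt : Pᵀ = P := hP
  refine IsSymm.fromBlocks ?_ ?_ ?_ <;>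
    simp [IsSymm, transpose_sub, transpose_mul, hPt, Matrix.mul_assoc]

theorem isNegSemidef_lmiMin_iff {P : Matrix (Fin n) (Fin n) ℝ} (hP : P.IsSymm) (ζ : ℝ) :
    IsNegSemidef (lmiMin A B C D P ζ) ↔ DissipationIneq A B C D ζ P := by
  refine ⟨fun h x v => ?_, fun h => ⟨isSymm_lmiMin A B C D hP ζ, fun z => ?_⟩⟩
  · linarith [sumElim_dotProduct_lmiMin_mulVec A B C D P ζ x v ▸ h.2 (Sum.elim x v)]
  · rw [← Sum.elim_comp_inl_inr z, sumElim_dotProduct_lmiMin_mulVec]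
    linarith [h (z ∘ Sum.inl) (z ∘ Sum.inr)]

lemma supply_succ (ζ : ℝ) (N : ℕ) (u : ℕ → Fin m → ℝ) :
    supply A B C D ζ (N + 1) u = supply A B C D ζ N u
      + (out A B C D N u ⬝ᵥ out A B C D N u - ζ ^ 2 * (u N ⬝ᵥ u N)) :=
  Finset.sum_range_succ _ _

lemma DissipationIneq.quadForm_state_le_supply {ζ : ℝ} {P : Matrix (Fin n) (Fin n) ℝ}
    (h : DissipationIneq A B C D ζ P) (N : ℕ) (u : ℕ → Fin m → ℝ) :
    state A B N u ⬝ᵥ P *ᵥ state A B N u ≤ supply A B C D ζ N u := by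
  induction N with
  | zero => simp [supply]
  | succ N ih =>
    rw [supply_succ, state_succ, out_apply]
    linarith [h (state A B N u) (u N)]

lemma DissipationIneq.supplyNonneg {ζ : ℝ} {P : Matrix (Fin n) (Fin n) ℝ}
    (hP : IsPosSemidefR P) (h : DissipationIneq A B C D ζ P) (N : ℕ) :
    SupplyNonneg A B C D ζ N :=
  fun u _ => (hP.2 _).trans (h.quadForm_state_le_supply A B C D N u)

def delay (u : ℕ → Fin m → ℝ) : ℕ → Fin m → ℝ
  | 0 => 0
  | k + 1 => u k

lemma delay_mem {N : ℕ} {u : ℕ → Fin m → ℝ} (hu : u ∈ inputsBefore N) :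
    delay u ∈ inputsBefore (N + 1)
  | 0, h => by omega
  | k + 1, h => hu k (by omega)

lemma state_delay (k : ℕ) (u : ℕ → Fin m → ℝ) : state A B (k + 1) (delay u) = state A B k u := by
  induction k with
  | zero => simp [delay]
  | succ k ih => rw [state_succ, ih]; rfl

lemma supply_delay (ζ : ℝ) (N : ℕ) (u : ℕ → Fin m → ℝ) :
    supply A B C D ζ (N + 1) (delay u) = supply A B C D ζ N u := by
  simp only [supply, Finset.sum_range_succ', out_apply, state_delay]
  simp [delay]

theorem antitone_supplyNonneg (ζ : ℝ) : Antitone (SupplyNonneg A B C D ζ) :=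
  antitone_nat_of_succ_le fun N h u hu => supply_delay A B C D ζ N u ▸ h _ (delay_mem hu)

lemma state_congr {N : ℕ} {u v : ℕ → Fin m → ℝ} (h : ∀ k < N, u k = v k) :
    state A B N u = state A B N v := by
  induction N with
  | zero => rfl
  | succ N ih => rw [state_succ, state_succ, ih fun k hk => h k (by omega), h N (by omega)]

lemma supply_congr (ζ : ℝ) {N : ℕ} {u v : ℕ → Fin m → ℝ} (h : ∀ k < N, u k = v k) :
    supply A B C D ζ N u = supply A B C D ζ N v := by
  refine Finset.sum_congr rfl fun k hk => ?_
  have hk := Finset.mem_range.mp hk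
  rw [out_apply, out_apply, state_congr A B fun i hi => h i (by omega), h k hk]

lemma update_mem {N : ℕ} {u : ℕ → Fin m → ℝ} (hu : u ∈ inputsBefore N) (v : Fin m → ℝ) :
    Function.update u N v ∈ inputsBefore (N + 1) := fun k hk => by
  rw [Function.update_of_ne (by omega), hu k (by omega)]

lemma state_update (N : ℕ) (u : ℕ → Fin m → ℝ) (v : Fin m → ℝ) :
    state A B (N + 1) (Function.update u N v) = A *ᵥ state A B N u + B *ᵥ v := by
  rw [state_succ, Function.update_self,
    state_congr A B fun k hk => Function.update_of_ne hk.ne _ _]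

lemma supply_update (ζ : ℝ) (N : ℕ) (u : ℕ → Fin m → ℝ) (v : Fin m → ℝ) :
    supply A B C D ζ (N + 1) (Function.update u N v) = supply A B C D ζ N u
      + ((C *ᵥ state A B N u + D *ᵥ v) ⬝ᵥ (C *ᵥ state A B N u + D *ᵥ v) - ζ ^ 2 * (v ⬝ᵥ v)) := by
  have hbelow : ∀ k < N, Function.update u N v k = u k := fun k hk =>
    Function.update_of_ne hk.ne _ _
  rw [supply_succ, out_apply, Function.update_self, supply_congr A B C D ζ hbelow,
    state_congr A B hbelow]

lemma state_single {N i : ℕ} (hi : i < N) (v : Fin m → ℝ) :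
    state A B N (Pi.single i v) = (A ^ (N - 1 - i) * B) *ᵥ v := by
  rw [state_eq_sum, Finset.sum_eq_single_of_mem i (Finset.mem_range.mpr hi)
    fun j _ hj => by rw [Pi.single_eq_of_ne hj, mulVec_zero], Pi.single_eq_same]

theorem map_state_inputsBefore (hctrb : Controllable A B) {N : ℕ} (hN : n ≤ N) :
    (inputsBefore N).map (state A B N) = ⊤ := by
  set K := Matrix.of fun i (p : Fin n × Fin m) => (A ^ (p.1 : ℕ) * B) i p.2
  have hK : LinearMap.range K.mulVecLin = ⊤ :=
    Submodule.eq_top_of_finrank_eq (by rw [← Matrix.rank, hctrb]; simp)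
  rw [eq_top_iff, ← hK, Matrix.range_mulVecLin, Submodule.span_le]
  rintro _ ⟨p, rfl⟩
  have hp : (p.1 : ℕ) < N := by omega
  refine ⟨Pi.single (N - 1 - p.1) (Pi.single p.2 1), fun k hk => ?_, ?_⟩
  · rw [Pi.single_eq_of_ne (by omega)]
  · rw [state_single A B (by omega), Nat.sub_sub_self (by omega), mulVec_single_one]
    rfl

def window (N : ℕ) : (Fin N × Fin m → ℝ) →ₗ[ℝ] (ℕ → Fin m → ℝ) where
  toFun w k a := if h : k < N then w (⟨k, h⟩, a) else 0
  map_add' w w' := by ext k a; by_cases h : k < N <;> simp [h]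
  map_smul' c w := by ext k a; by_cases h : k < N <;> simp [h]

lemma window_mem {N : ℕ} (w : Fin N × Fin m → ℝ) : window N w ∈ inputsBefore N :=
  fun k hk => by ext a; simp [window, hk]

lemma window_restrict {N : ℕ} {u : ℕ → Fin m → ℝ} (hu : u ∈ inputsBefore N) :
    window N (fun p => u p.1 p.2) = u := by
  ext k a
  by_cases hk : k < N
  · simp [window, hk]
  · simp [window, hk, hu k (by omega)]

def windowOutput (N : ℕ) : (Fin N × Fin m → ℝ) →ₗ[ℝ] (Fin N × Fin m → ℝ) :=
  LinearMap.pi fun p => LinearMap.proj p.2 ∘ₗ out A B C D p.1 ∘ₗ window N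

lemma supply_window (ζ : ℝ) (N : ℕ) (w : Fin N × Fin m → ℝ) :
    supply A B C D ζ N (window N w)
      = windowOutput A B C D N w ⬝ᵥ windowOutput A B C D N w - ζ ^ 2 * (w ⬝ᵥ w) := by
  simp only [supply, Finset.sum_sub_distrib, ← Finset.mul_sum, dotProduct,
    Fintype.sum_prod_type]
  rw [← Fin.sum_univ_eq_sum_range, ← Fin.sum_univ_eq_sum_range]
  simp [windowOutput, window]

theorem exists_quadForm_eq_minSupply (hctrb : Controllable A B) {ζ : ℝ} {N : ℕ} (hN : n ≤ N)
    (h : SupplyNonneg A B C D ζ N) :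
    ∃ P : Matrix (Fin n) (Fin n) ℝ, P.IsSymm ∧
      (∀ u ∈ inputsBefore N, state A B N u ⬝ᵥ P *ᵥ state A B N u ≤ supply A B C D ζ N u) ∧
      ∀ x, ∃ u ∈ inputsBefore N, state A B N u = x ∧ supply A B C D ζ N u = x ⬝ᵥ P *ᵥ x := by
  set Y := LinearMap.toMatrix' (windowOutput A B C D N)
  set L := LinearMap.toMatrix' (state A B N ∘ₗ window N)
  have hsupply : ∀ w, supply A B C D ζ N (window N w) = w ⬝ᵥ (Yᵀ * Y - ζ ^ 2 • 1) *ᵥ w :=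
    fun w => by
      rw [supply_window, sub_mulVec, dotProduct_sub, ← mulVec_mulVec,
        dotProduct_transpose_mulVec, LinearMap.toMatrix'_mulVec, smul_mulVec, one_mulVec,
        dotProduct_smul, smul_eq_mul, dotProduct_comm w]
  have hQ : (Yᵀ * Y - ζ ^ 2 • 1).PosSemidef :=
    .of_dotProduct_mulVec_nonneg (by simp [IsHermitian, transpose_sub])
      fun w => by simpa [← hsupply] using h _ (window_mem w)
  have hL : Function.Surjective L.mulVec := fun x => by
    obtain ⟨u, hu, rfl⟩ := (map_state_inputsBefore A B hctrb hN).ge (Submodule.mem_top (x := x))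
    exact ⟨fun p => u p.1 p.2, by simp [L, window_restrict hu]⟩
  obtain ⟨P, hP, hle, heq⟩ := hQ.exists_isSymm_min_on_fibers hL
  refine ⟨P, hP, fun u hu => ?_, fun x => ?_⟩
  · simpa [L, ← hsupply, window_restrict hu] using hle fun p => u p.1 p.2
  · obtain ⟨w, rfl, hw⟩ := heq x
    exact ⟨window N w, window_mem w, by simp [L], by rw [hsupply, hw]⟩

theorem exists_dissipationIneq (hctrb : Controllable A B) {ζ : ℝ}
    (h : ∀ N, SupplyNonneg A B C D ζ N) :
    ∃ P, IsPosSemidefR P ∧ DissipationIneq A B C D ζ P := by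
  choose P hsym hle hatt using fun j =>
    exists_quadForm_eq_minSupply A B C D hctrb (Nat.le_add_right n j) (h (n + j))
  have hnonneg : ∀ j x, 0 ≤ x ⬝ᵥ P j *ᵥ x := fun j x => by
    obtain ⟨u, hu, -, hux⟩ := hatt j x
    exact hux ▸ h _ u hu
  have hanti : ∀ x, Antitone fun j => x ⬝ᵥ P j *ᵥ x := fun x =>
    antitone_nat_of_succ_le fun j => by
      obtain ⟨u, hu, rfl, hux⟩ := hatt j x
      have := hle (j + 1) (delay u) (delay_mem hu)
      rwa [← add_assoc, state_delay, supply_delay, hux] at this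
  have hstep : ∀ j x v, (A *ᵥ x + B *ᵥ v) ⬝ᵥ P (j + 1) *ᵥ (A *ᵥ x + B *ᵥ v)
      ≤ x ⬝ᵥ P j *ᵥ x + ((C *ᵥ x + D *ᵥ v) ⬝ᵥ (C *ᵥ x + D *ᵥ v) - ζ ^ 2 * (v ⬝ᵥ v)) := by
    intro j x v
    obtain ⟨u, hu, rfl, hux⟩ := hatt j x
    have := hle (j + 1) (Function.update u (n + j) v) (update_mem hu v)
    rwa [← add_assoc, state_update, supply_update, hux] at this
  have hlim : ∀ x, Tendsto (fun j => x ⬝ᵥ P j *ᵥ x) atTop (𝓝 (⨅ j, x ⬝ᵥ P j *ᵥ x)) :=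
    fun x => tendsto_atTop_ciInf (hanti x) ⟨0, by rintro _ ⟨j, rfl⟩; exact hnonneg j x⟩
  obtain ⟨P', hP'sym, hP'⟩ := Matrix.exists_isSymm_of_tendsto_quadForm hsym hlim
  refine ⟨P', ⟨hP'sym, fun x => ?_⟩, fun x v => ?_⟩
  · rw [hP']
    exact le_ciInf (hnonneg · x)
  · rw [hP', hP']
    exact le_of_tendsto_of_tendsto' ((hlim _).comp (tendsto_add_atTop_nat 1))
      ((hlim x).add_const _) (hstep · x v)

theorem exists_lmiMin_iff_supplyNonneg (hctrb : Controllable A B) (ζ : ℝ) :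
    (∃ P, IsPosSemidefR P ∧ IsNegSemidef (lmiMin A B C D P ζ))
      ↔ ∀ N, SupplyNonneg A B C D ζ N := by
  refine ⟨fun ⟨P, hP, hlmi⟩ => ?_, fun h => ?_⟩
  · exact ((isNegSemidef_lmiMin_iff A B C D hP.1 ζ).mp hlmi).supplyNonneg A B C D hP
  · obtain ⟨P, hP, hdiss⟩ := exists_dissipationIneq A B C D hctrb h
    exact ⟨P, hP, (isNegSemidef_lmiMin_iff A B C D hP.1 ζ).mpr hdiss⟩

theorem antitone_minGain :
    Antitone fun τ => minGain (ltwoTau m (τ + 1)) (TtauMap A B C D (τ + 1)) :=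
  antitone_nat_of_succ_le fun _ => ENNReal.le_of_forall_ofReal_le fun ζ hζ h =>
    (ofReal_le_minGain_iff A B C D hζ _).mpr <|
      antitone_supplyNonneg A B C D ζ (Nat.le_succ _) ((ofReal_le_minGain_iff A B C D hζ _).mp h)

theorem ofReal_le_iInf_minGain_iff {ζ : ℝ} (hζ : 0 ≤ ζ) :
    ENNReal.ofReal ζ ≤ ⨅ τ, minGain (ltwoTau m (τ + 1)) (TtauMap A B C D (τ + 1))
      ↔ ∀ N, SupplyNonneg A B C D ζ N := by
  simp_rw [le_iInf_iff, ofReal_le_minGain_iff A B C D hζ]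
  exact ⟨fun h N => antitone_supplyNonneg A B C D ζ (Nat.le_add_right N 2) (h N), fun h τ => h _⟩

end LTI

theorem stmt3_general {n m : ℕ}
    (A : Matrix (Fin n) (Fin n) ℝ) (B : Matrix (Fin n) (Fin m) ℝ)
    (C : Matrix (Fin m) (Fin n) ℝ) (D : Matrix (Fin m) (Fin m) ℝ)
    (hctrb : Controllable A B) :
    Tendsto (fun τ : ℕ => minGain (ltwoTau m (τ + 1)) (TtauMap A B C D (τ + 1))) atTop
      (𝓝 (sSup {g : ℝ≥0∞ | ∃ ζ : ℝ, 0 ≤ ζ ∧ g = ENNReal.ofReal ζ ∧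
        ∃ P : Matrix (Fin n) (Fin n) ℝ, IsPosSemidefR P ∧ IsNegSemidef (lmiMin A B C D P ζ)})) := by
  have hlim := tendsto_atTop_iInf (LTI.antitone_minGain A B C D)
  rwa [ENNReal.eq_sSup_of_ofReal_le_iff fun ζ hζ =>
    (LTI.ofReal_le_iInf_minGain_iff A B C D hζ).trans
      (LTI.exists_lmiMin_iff_supplyNonneg A B C D hctrb ζ).symm] at hlim

/-- For a minimal realization, `lim_{τ→∞} γ₋(T^τ)` equals the supremum of the
ζ ≥ 0 for which the minimum-gain LMI has a symmetric positive semidefinite solution P. -/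
theorem stmt3 {n m : ℕ} (hn : 1 ≤ n) (hm : 1 ≤ m)
    (A : Matrix (Fin n) (Fin n) ℝ) (B : Matrix (Fin n) (Fin m) ℝ)
    (C : Matrix (Fin m) (Fin n) ℝ) (D : Matrix (Fin m) (Fin m) ℝ)
    (hctrb : Controllable A B) (hobs : Observable A C) :
    Tendsto (fun τ : ℕ => minGain (ltwoTau m (τ + 1)) (TtauMap A B C D (τ + 1))) atTop
      (𝓝 (sSup {g : ℝ≥0∞ | ∃ ζ : ℝ, 0 ≤ ζ ∧ g = ENNReal.ofReal ζ ∧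
        ∃ P : Matrix (Fin n) (Fin n) ℝ, IsPosSemidefR P ∧ IsNegSemidef (lmiMin A B C D P ζ)})) :=
  stmt3_general A B C D hctrb
end
end

section
/- Let D ∈ ℝ^{m×m} be invertible, ζ > 0, and P = Pᵀ ∈ ℝ^{n×n}. Set Ā = A − BD⁻¹C, B̄ = BD⁻¹, C̄ = −D⁻¹C, D̄ = D⁻¹, γ = 1/ζ, and P̃ = P/ζ². Then the block matrix [[AᵀPA − P − CᵀC, AᵀPB − CᵀD], [BᵀPA − DᵀC, BᵀPB − DᵀD + ζ²I]] is negative semidefinite if and only if the block matrix [[ĀᵀP̃Ā − P̃ + C̄ᵀC̄, ĀᵀP̃B̄ + C̄ᵀD̄], [B̄ᵀP̃Ā + D̄ᵀC̄, B̄ᵀP̃B̄ + D̄ᵀD̄ − γ²I]] is negative semidefinite. -/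
open Matrix

noncomputable section

lemma negsemidef_smul {k : Type*} [Fintype k] (M : Matrix k k ℝ) {c : ℝ} (hc : 0 < c) :
    IsNegSemidef (c • M) ↔ IsNegSemidef M := by
  have hsymm : (c • M).IsSymm ↔ M.IsSymm := by
    unfold Matrix.IsSymm
    rw [Matrix.transpose_smul]
    constructor
    · intro h
      have := congrArg (fun X => c⁻¹ • X) h
      simpa [smul_smul, inv_mul_cancel₀ hc.ne'] using this
    · intro h; rw [h]
  constructor
  · rintro ⟨h1, h2⟩
    refine ⟨hsymm.mp h1, fun x => ?_⟩
    have := h2 x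
    rw [Matrix.smul_mulVec, dotProduct_smul, smul_eq_mul] at this
    nlinarith [this, mul_pos hc hc]
  · rintro ⟨h1, h2⟩
    refine ⟨hsymm.mpr h1, fun x => ?_⟩
    rw [Matrix.smul_mulVec, dotProduct_smul, smul_eq_mul]
    exact mul_nonpos_of_nonneg_of_nonpos hc.le (h2 x)

lemma negsemidef_conj {k : Type*} [Fintype k] [DecidableEq k] (M T : Matrix k k ℝ)
    (hT : IsUnit T.det) : IsNegSemidef (Tᵀ * M * T) ↔ IsNegSemidef M := by
  have hTT : IsUnit (Tᵀ).det := by rwa [Matrix.det_transpose]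
  have hcancel : ∀ X : Matrix k k ℝ, (Tᵀ)⁻¹ * (Tᵀ * X * T) * T⁻¹ = X := by
    intro X
    rw [Matrix.mul_assoc (Tᵀ) X T, Matrix.nonsing_inv_mul_cancel_left _ _ hTT,
      Matrix.mul_nonsing_inv_cancel_right _ _ hT]
  have hquad : ∀ x : k → ℝ, x ⬝ᵥ (Tᵀ * M * T).mulVec x = (T.mulVec x) ⬝ᵥ M.mulVec (T.mulVec x) := by
    intro x
    rw [← Matrix.mulVec_mulVec, ← Matrix.mulVec_mulVec, Matrix.dotProduct_mulVec x (Tᵀ),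
      Matrix.vecMul_transpose]
  have hsurj : ∀ y : k → ℝ, ∃ x, T.mulVec x = y := by
    intro y
    exact ⟨T⁻¹.mulVec y, by
      rw [Matrix.mulVec_mulVec, Matrix.mul_nonsing_inv _ hT, Matrix.one_mulVec]⟩
  constructor
  · rintro ⟨h1, h2⟩
    constructor
    · unfold Matrix.IsSymm at h1 ⊢
      have heq : Tᵀ * Mᵀ * T = Tᵀ * M * T := by
        calc Tᵀ * Mᵀ * T = (Tᵀ * M * T)ᵀ := by
              rw [Matrix.transpose_mul, Matrix.transpose_mul, Matrix.transpose_transpose,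
                Matrix.mul_assoc]
          _ = Tᵀ * M * T := h1
      calc Mᵀ = (Tᵀ)⁻¹ * (Tᵀ * Mᵀ * T) * T⁻¹ := (hcancel Mᵀ).symm
        _ = (Tᵀ)⁻¹ * (Tᵀ * M * T) * T⁻¹ := by rw [heq]
        _ = M := hcancel M
    · intro y
      obtain ⟨x, rfl⟩ := hsurj y
      have := h2 x
      rwa [hquad] at this
  · rintro ⟨h1, h2⟩
    constructor
    · unfold Matrix.IsSymm at h1 ⊢
      rw [Matrix.transpose_mul, Matrix.transpose_mul, Matrix.transpose_transpose, h1,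
        Matrix.mul_assoc]
    · intro x
      rw [hquad]
      exact h2 _

/-- For invertible D, ζ > 0 and symmetric P, the minimum-gain LMI for
(A,B,C,D) with (P, ζ) holds iff the maximum-gain LMI for the inverse system
(Ā, B̄, C̄, D̄) = (A − BD⁻¹C, BD⁻¹, −D⁻¹C, D⁻¹) with (P̃, γ) = (P/ζ², 1/ζ) holds. -/
theorem stmt11 {n m : ℕ}
    (A : Matrix (Fin n) (Fin n) ℝ) (B : Matrix (Fin n) (Fin m) ℝ)
    (C : Matrix (Fin m) (Fin n) ℝ) (D : Matrix (Fin m) (Fin m) ℝ)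
    (hD : IsUnit D.det) (ζ : ℝ) (hζ : 0 < ζ)
    (P : Matrix (Fin n) (Fin n) ℝ) (hP : P.IsSymm) :
    IsNegSemidef (lmiMin A B C D P ζ) ↔
      IsNegSemidef
        (lmiMax (A - B * D⁻¹ * C) (B * D⁻¹) (-(D⁻¹ * C)) D⁻¹ ((ζ ^ 2)⁻¹ • P) (1 / ζ)) := by
  have hz2 : (0:ℝ) < ζ ^ 2 := by positivity
  have hz2' : (ζ ^ 2 : ℝ) ≠ 0 := hz2.ne'
  set T : Matrix (Fin n ⊕ Fin m) (Fin n ⊕ Fin m) ℝ :=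
    Matrix.fromBlocks (1 : Matrix (Fin n) (Fin n) ℝ) 0 (-(D⁻¹ * C)) D⁻¹ with hTdef
  have hTdet : IsUnit T.det := by
    rw [hTdef, Matrix.det_fromBlocks_zero₁₂, Matrix.det_one, one_mul]
    exact D.isUnit_nonsing_inv_det hD
  have key : Tᵀ * lmiMin A B C D P ζ * T
      = ζ ^ 2 • lmiMax (A - B * D⁻¹ * C) (B * D⁻¹) (-(D⁻¹ * C)) D⁻¹ ((ζ ^ 2)⁻¹ • P) (1 / ζ) := by
    unfold lmiMin lmiMax
    have h1 : ζ ^ 2 * (ζ ^ 2)⁻¹ = 1 := mul_inv_cancel₀ hz2'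
    have h2 : ζ ^ 2 * (1 / ζ) ^ 2 = 1 := by field_simp
    rw [hTdef, Matrix.fromBlocks_transpose, Matrix.fromBlocks_multiply, Matrix.fromBlocks_multiply,
      Matrix.fromBlocks_smul, Matrix.fromBlocks_inj]
    have hKD : D⁻¹ * D = 1 := Matrix.nonsing_inv_mul D hD
    have hDK : D * D⁻¹ = 1 := Matrix.mul_nonsing_inv D hD
    have hT1 : D⁻¹ᵀ * Dᵀ = 1 := by rw [← Matrix.transpose_mul, hDK, Matrix.transpose_one]
    have hc2n : D⁻¹ᵀ * (Dᵀ * C) = C := by rw [← Matrix.mul_assoc, hT1, Matrix.one_mul]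
    have hc3 : ∀ X : Matrix (Fin m) (Fin n) ℝ, D⁻¹ᵀ * (Dᵀ * X) = X := by
      intro X; rw [← Matrix.mul_assoc, hT1, Matrix.one_mul]
    have hc4 : ∀ X : Matrix (Fin m) (Fin m) ℝ, D⁻¹ᵀ * (Dᵀ * X) = X := by
      intro X; rw [← Matrix.mul_assoc, hT1, Matrix.one_mul]
    refine ⟨?_, ?_, ?_, ?_⟩ <;>
    · simp only [smul_add, smul_sub, smul_neg, smul_smul, Matrix.mul_smul, Matrix.smul_mul,
        h1, h2, one_smul,
        Matrix.transpose_neg, Matrix.transpose_mul, Matrix.transpose_sub, Matrix.transpose_zero,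
        Matrix.transpose_one,
        Matrix.mul_add, Matrix.add_mul, Matrix.mul_sub, Matrix.sub_mul, Matrix.mul_neg,
        Matrix.neg_mul, Matrix.mul_one, Matrix.one_mul, Matrix.mul_zero, Matrix.zero_mul,
        Matrix.mul_assoc, hDK, hKD, hT1, hc2n, hc3, hc4,
        Matrix.mul_nonsing_inv_cancel_left _ _ hD, Matrix.nonsing_inv_mul_cancel_left _ _ hD,
        neg_neg]
      abel
  rw [← negsemidef_conj (lmiMin A B C D P ζ) T hTdet, key, negsemidef_smul _ hz2]

end
end

section
/- Under the noisy-data setup (true system in difference-operator form with l at least its lag, data consistent with some noise V* ∈ 𝒱, Q ≺ 0, and the matrix [[Q̄, S̄],[S̄ᵀ, R̄]] invertible): if there exist a symmetric positive semidefinite P ∈ ℝ^{2ml×2ml} and μ ≥ 0 such that Gᵀ·diag(−P, P, −γ²I_m, I_m)·G − μ·[[Q̃, S̃],[S̃ᵀ, R̃]] ⪯ 0, then lim_{τ→∞} Γ(T^τ) ≤ γ, where T^τ are the truncated input-output operators of the true noise-free system. -/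
open scoped ENNReal
open Filter Matrix Topology

noncomputable section

/-- Membership of a noise matrix V in the noise set 𝒱. -/
def inNoiseSet {r mv : ℕ} (Q : Matrix (Fin r) (Fin r) ℝ) (S : Matrix (Fin r) (Fin mv) ℝ)
    (R : Matrix (Fin mv) (Fin mv) ℝ) (V : Matrix (Fin mv) (Fin r) ℝ) : Prop :=
  IsPosSemidefR ((Matrix.fromRows Vᵀ (1 : Matrix (Fin mv) (Fin mv) ℝ))ᵀ
    * Matrix.fromBlocks Q S Sᵀ R * Matrix.fromRows Vᵀ (1 : Matrix (Fin mv) (Fin mv) ℝ))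

/-- The data matrix M = [[(Ξ; U_Ξ), 0], [Y_Ξ, I]]. -/
def Mdata {m : ℕ} (l N : ℕ) (u y : ℕ → Fin m → ℝ) :
    Matrix ((rindex l m ⊕ Fin m) ⊕ Fin m) (Fin (N - l) ⊕ Fin m) ℝ :=
  Matrix.fromBlocks (Matrix.fromRows (XiMat l N u y) (UXi m l N u)) 0 (UXi m l N y) 1

/-- The noise-weight matrix W = [[Q, S Bᵥᵀ], [Bᵥ Sᵀ, Bᵥ R Bᵥᵀ]]. -/
def Wmat {r m mv : ℕ} (Q : Matrix (Fin r) (Fin r) ℝ) (S : Matrix (Fin r) (Fin mv) ℝ)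
    (R : Matrix (Fin mv) (Fin mv) ℝ) (Bv : Matrix (Fin m) (Fin mv) ℝ) :
    Matrix (Fin r ⊕ Fin m) (Fin r ⊕ Fin m) ℝ :=
  Matrix.fromBlocks Q (S * Bvᵀ) (Bv * Sᵀ) (Bv * R * Bvᵀ)

/-- The matrix [[Q̄, S̄], [S̄ᵀ, R̄]] = M W Mᵀ. -/
def QSRbar {m mv : ℕ} (l N : ℕ) (u y : ℕ → Fin m → ℝ)
    (Q : Matrix (Fin (N - l)) (Fin (N - l)) ℝ) (S : Matrix (Fin (N - l)) (Fin mv) ℝ)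
    (R : Matrix (Fin mv) (Fin mv) ℝ) (Bv : Matrix (Fin m) (Fin mv) ℝ) :
    Matrix ((rindex l m ⊕ Fin m) ⊕ Fin m) ((rindex l m ⊕ Fin m) ⊕ Fin m) ℝ :=
  Mdata l N u y * Wmat Q S R Bv * (Mdata l N u y)ᵀ

/-- The second block row ((Ã; 0), (B̃; 0), (0; I)) of the matrix G, where Ã, B̃ are the
block-shift matrices of the difference-operator representation: it maps (ξ, u, w) to the
vector ξ₊ whose u-block and y-block are shifted, with u in the slot for `u_k` and w in the
slot for `y_k`. -/
def Kshift (l m : ℕ) : Matrix (rindex l m) ((rindex l m ⊕ Fin m) ⊕ Fin m) ℝ :=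
  Matrix.of fun r c =>
    match r, c with
    | .inl (i, a), .inl (.inl (.inl (i', a'))) =>
        if (i : ℕ) + 1 = (i' : ℕ) ∧ a = a' then 1 else 0
    | .inl (i, a), .inl (.inr a') => if (i : ℕ) + 1 = l ∧ a = a' then 1 else 0
    | .inr (i, a), .inl (.inl (.inr (i', a'))) =>
        if (i : ℕ) + 1 = (i' : ℕ) ∧ a = a' then 1 else 0
    | .inr (i, a), .inr a' => if (i : ℕ) + 1 = l ∧ a = a' then 1 else 0
    | _, _ => 0

/-- The matrix G with block rows (I,0,0), ((Ã;0),(B̃;0),(0;I)), (0,I,0), (0,0,I). -/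
def Gmat (l m : ℕ) :
    Matrix ((rindex l m ⊕ rindex l m) ⊕ (Fin m ⊕ Fin m)) ((rindex l m ⊕ Fin m) ⊕ Fin m) ℝ :=
  Matrix.fromRows
    (Matrix.fromRows
      (Matrix.fromCols (Matrix.fromCols 1 0) 0)
      (Kshift l m))
    (Matrix.fromRows
      (Matrix.fromCols (Matrix.fromCols 0 1) 0)
      (Matrix.fromCols (Matrix.fromCols 0 0) 1))

/-- The block-diagonal multiplier diag(−P, P, Λ, Ψ). -/
def PhiMat {l m : ℕ} (P : Matrix (rindex l m) (rindex l m) ℝ) (Λ Ψ : Matrix (Fin m) (Fin m) ℝ) :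
    Matrix ((rindex l m ⊕ rindex l m) ⊕ (Fin m ⊕ Fin m))
      ((rindex l m ⊕ rindex l m) ⊕ (Fin m ⊕ Fin m)) ℝ :=
  Matrix.fromBlocks (Matrix.fromBlocks (-P) 0 0 P) 0 0 (Matrix.fromBlocks Λ 0 0 Ψ)

/-! Evaluating the LMI at `g = (ξ_k, u_k, y_k)` gives
`|y_k|² - γ²|u_k|² + ξ_{k+1}ᵀ P ξ_{k+1} - ξ_kᵀ P ξ_k ≤ μ gᵀ [[Q̃, S̃], [S̃ᵀ, R̃]] g`.
Along trajectories of the true system `y_k = (C̃, D̃) (ξ_k; u_k)`, and because the true coefficients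
explain the data with a noise in `𝒱` while `Q ⪯ 0`, the right-hand side is `≤ 0`. Feeding the input
delayed by `l` steps (so that `ξ_l = 0`) and telescoping yields
`∑_{k<K} |y_k|² ≤ γ² ∑_{k<K} |u_k|²` for every horizon `K`; complex inputs are handled through their
real and imaginary parts. Hence `Γ(T^τ) ≤ γ` for every `τ`, and so for the limit. -/

theorem mulVec_dotProduct_eq_dotProduct_transpose_mulVec {ι κ : Type*} [Fintype ι] [Fintype κ]
    (M : Matrix ι κ ℝ) (x : κ → ℝ) (y : ι → ℝ) : (M *ᵥ x) ⬝ᵥ y = x ⬝ᵥ (Mᵀ *ᵥ y) := by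
  rw [dotProduct_comm, dotProduct_transpose_mulVec]

theorem IsNegDef.dotProduct_mulVec_nonpos {k : Type*} [Fintype k] {M : Matrix k k ℝ}
    (hM : IsNegDef M) (x : k → ℝ) : x ⬝ᵥ M *ᵥ x ≤ 0 := by
  rcases eq_or_ne x 0 with rfl | hx
  · simp
  · exact (hM.2 x hx).le

theorem sum_range_nonpos_of_le_sub_succ {f V : ℕ → ℝ} (hV₀ : V 0 = 0) (hV : ∀ k, 0 ≤ V k)
    (h : ∀ k, f k ≤ V k - V (k + 1)) (K : ℕ) : ∑ k ∈ Finset.range K, f k ≤ 0 :=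
  calc ∑ k ∈ Finset.range K, f k ≤ ∑ k ∈ Finset.range K, (V k - V (k + 1)) :=
        Finset.sum_le_sum fun k _ => h k
    _ = V 0 - V K := Finset.sum_range_sub' V K
    _ ≤ 0 := by linarith [hV K]

theorem exists_eq_mulVec_mulVec_and_dotProduct_inv_mulVec {α β : Type*} [Fintype α]
    [DecidableEq α] [Fintype β] {M : Matrix α β ℝ} {W : Matrix β β ℝ}
    (hdet : IsUnit (M * W * Mᵀ).det) (z : α → ℝ) :
    ∃ s, z = M *ᵥ (W *ᵥ s) ∧ z ⬝ᵥ (M * W * Mᵀ)⁻¹ *ᵥ z = s ⬝ᵥ W *ᵥ s := by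
  set s := Mᵀ *ᵥ ((M * W * Mᵀ)⁻¹ *ᵥ z)
  have hz : z = M *ᵥ (W *ᵥ s) := by
    rw [mulVec_mulVec, mulVec_mulVec, mulVec_mulVec, mul_nonsing_inv _ hdet, one_mulVec]
  refine ⟨s, hz, ?_⟩
  nth_rewrite 1 [hz]
  rw [mulVec_dotProduct_eq_dotProduct_transpose_mulVec, dotProduct_comm]

theorem Wmat_eq {r m mv : ℕ} (Q : Matrix (Fin r) (Fin r) ℝ) (S : Matrix (Fin r) (Fin mv) ℝ)
    (R : Matrix (Fin mv) (Fin mv) ℝ) (Bv : Matrix (Fin m) (Fin mv) ℝ) :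
    Wmat Q S R Bv = fromBlocks (1 : Matrix (Fin r) (Fin r) ℝ) 0 0 Bv * fromBlocks Q S Sᵀ R
      * (fromBlocks (1 : Matrix (Fin r) (Fin r) ℝ) 0 0 Bv)ᵀ := by
  simp [Wmat, fromBlocks_transpose, fromBlocks_multiply, Matrix.mul_assoc]

theorem fromBlocks_quadForm_nonpos_of_orthogonal {r mv : ℕ} {Q : Matrix (Fin r) (Fin r) ℝ}
    {S : Matrix (Fin r) (Fin mv) ℝ} {R : Matrix (Fin mv) (Fin mv) ℝ} (hQ : Q.IsSymm)
    (hQneg : ∀ x, x ⬝ᵥ Q *ᵥ x ≤ 0) {x a : Fin r → ℝ} {t : Fin mv → ℝ}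
    (hq : 0 ≤ Sum.elim a t ⬝ᵥ fromBlocks Q S Sᵀ R *ᵥ Sum.elim a t)
    (horth : Sum.elim a t ⬝ᵥ fromBlocks Q S Sᵀ R *ᵥ Sum.elim x t = 0) :
    Sum.elim x t ⬝ᵥ fromBlocks Q S Sᵀ R *ᵥ Sum.elim x t ≤ 0 := by
  have hxa := hQneg (x - a)
  simp only [fromBlocks_mulVec, Sum.elim_comp_inl, Sum.elim_comp_inr,
    sumElim_dotProduct_sumElim, dotProduct_add, dotProduct_transpose_mulVec] at hq horth ⊢
  rw [mulVec_sub, dotProduct_sub, sub_dotProduct, sub_dotProduct,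
    ← dotProduct_transpose_mulVec Q a x, hQ.eq] at hxa
  linarith

theorem eq_neg_mulVec_of_graph_eq_mulVec {ι : Type*} [Fintype ι] {r m mv : ℕ}
    {H : Matrix ι (Fin r) ℝ} {Yd : Matrix (Fin m) (Fin r) ℝ}
    {Z : Matrix (Fin m) ι ℝ} {Bv : Matrix (Fin m) (Fin mv) ℝ} {V : Matrix (Fin mv) (Fin r) ℝ}
    (hZ : Z * H = Yd - Bv * V) {ζ : ι → ℝ} {a : Fin r → ℝ} {b : Fin m → ℝ}
    (h : Sum.elim ζ (Z *ᵥ ζ) = fromBlocks H 0 Yd (1 : Matrix (Fin m) (Fin m) ℝ) *ᵥ Sum.elim a b) :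
    b = -(Bv *ᵥ (V *ᵥ a)) := by
  simp only [fromBlocks_mulVec, one_mulVec, zero_mulVec, add_zero, Sum.elim_comp_inl,
    Sum.elim_comp_inr] at h
  have hζ : ζ = H *ᵥ a := by simpa using congrArg (· ∘ Sum.inl) h
  have hout : Z *ᵥ ζ = Yd *ᵥ a + b := by simpa using congrArg (· ∘ Sum.inr) h
  rw [hζ, mulVec_mulVec, hZ, sub_mulVec, ← mulVec_mulVec] at hout
  linear_combination -hout

section DataConsistency

variable {ι : Type*} [Fintype ι] [DecidableEq ι] {r m mv : ℕ}

def QSRbarOf (H : Matrix ι (Fin r) ℝ) (Yd : Matrix (Fin m) (Fin r) ℝ)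
    (Q : Matrix (Fin r) (Fin r) ℝ) (S : Matrix (Fin r) (Fin mv) ℝ)
    (R : Matrix (Fin mv) (Fin mv) ℝ) (Bv : Matrix (Fin m) (Fin mv) ℝ) :
    Matrix (ι ⊕ Fin m) (ι ⊕ Fin m) ℝ :=
  fromBlocks H 0 Yd (1 : Matrix (Fin m) (Fin m) ℝ) * Wmat Q S R Bv
    * (fromBlocks H 0 Yd (1 : Matrix (Fin m) (Fin m) ℝ))ᵀ

/-- With `Φ = [[Q, S], [Sᵀ, R]]` and `z = M W s`, the form `zᵀ (M W Mᵀ)⁻¹ z` equals `pᵀ Φ p` for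
`p = (s₁, Bvᵀ s₂)`. Since `Z` explains the data up to the noise `V`, the vector `(Vᵀ t, t)` built
from the second block `t` of `p` is `Φ`-orthogonal to `p`, and it is `Φ`-nonnegative because
`V ∈ 𝒱`. -/
theorem graph_dotProduct_QSRbarOf_inv_mulVec_nonpos {Q : Matrix (Fin r) (Fin r) ℝ}
    {S : Matrix (Fin r) (Fin mv) ℝ} {R : Matrix (Fin mv) (Fin mv) ℝ}
    {Bv : Matrix (Fin m) (Fin mv) ℝ} {V : Matrix (Fin mv) (Fin r) ℝ} (hQ : Q.IsSymm)
    (hQneg : ∀ x, x ⬝ᵥ Q *ᵥ x ≤ 0) (hV : inNoiseSet Q S R V)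
    {H : Matrix ι (Fin r) ℝ} {Yd : Matrix (Fin m) (Fin r) ℝ} {Z : Matrix (Fin m) ι ℝ}
    (hZ : Z * H = Yd - Bv * V) (hdet : IsUnit (QSRbarOf H Yd Q S R Bv).det) (ζ : ι → ℝ) :
    Sum.elim ζ (Z *ᵥ ζ) ⬝ᵥ (QSRbarOf H Yd Q S R Bv)⁻¹ *ᵥ Sum.elim ζ (Z *ᵥ ζ) ≤ 0 := by
  set E := fromBlocks (1 : Matrix (Fin r) (Fin r) ℝ) 0 0 Bv
  set Φ := fromBlocks Q S Sᵀ R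
  obtain ⟨s, hz, hform⟩ := exists_eq_mulVec_mulVec_and_dotProduct_inv_mulVec hdet
    (Sum.elim ζ (Z *ᵥ ζ))
  set p := Eᵀ *ᵥ s
  set φ := Φ *ᵥ p
  have hW : Wmat Q S R Bv *ᵥ s = E *ᵥ φ := by
    simp only [φ, p, E, Φ, Wmat_eq, mulVec_mulVec, Matrix.mul_assoc]
  rw [hW, dotProduct_comm s, mulVec_dotProduct_eq_dotProduct_transpose_mulVec,
    dotProduct_comm φ] at hform
  have hφ : φ = Sum.elim (φ ∘ Sum.inl) (φ ∘ Sum.inr) := (Sum.elim_comp_inl_inr φ).symm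
  have hnoise : Bv *ᵥ (φ ∘ Sum.inr) = -(Bv *ᵥ (V *ᵥ (φ ∘ Sum.inl))) := by
    refine eq_neg_mulVec_of_graph_eq_mulVec hZ (hz.trans ?_)
    rw [hW, hφ]
    simp [E, fromBlocks_mulVec]
  set t := p ∘ Sum.inr
  have hp : p = Sum.elim (p ∘ Sum.inl) t := (Sum.elim_comp_inl_inr p).symm
  have ht : t = Bvᵀ *ᵥ (s ∘ Sum.inr) := by
    simp [t, p, E, fromBlocks_transpose, fromBlocks_mulVec]
  have hq : 0 ≤ Sum.elim (Vᵀ *ᵥ t) t ⬝ᵥ Φ *ᵥ Sum.elim (Vᵀ *ᵥ t) t := by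
    have := hV.2 t
    rwa [← mulVec_mulVec, ← mulVec_mulVec, ← dotProduct_transpose_mulVec, transpose_transpose,
      fromRows_mulVec, one_mulVec, dotProduct_comm] at this
  have horth : Sum.elim (Vᵀ *ᵥ t) t ⬝ᵥ φ = 0 := by
    have h1 : (Vᵀ *ᵥ t) ⬝ᵥ (φ ∘ Sum.inl) = t ⬝ᵥ V *ᵥ (φ ∘ Sum.inl) := by
      rw [mulVec_dotProduct_eq_dotProduct_transpose_mulVec, transpose_transpose]
    have h2 : t ⬝ᵥ (φ ∘ Sum.inr) = -(t ⬝ᵥ V *ᵥ (φ ∘ Sum.inl)) := by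
      rw [ht, mulVec_dotProduct_eq_dotProduct_transpose_mulVec, transpose_transpose, hnoise,
        dotProduct_neg, ← transpose_transpose Bv,
        ← mulVec_dotProduct_eq_dotProduct_transpose_mulVec, transpose_transpose]
    rw [hφ, sumElim_dotProduct_sumElim, h1, h2, add_neg_cancel]
  rw [QSRbarOf, hform, show p ⬝ᵥ φ = p ⬝ᵥ Φ *ᵥ p from rfl, hp]
  exact fromBlocks_quadForm_nonpos_of_orthogonal hQ hQneg hq (by rwa [← hp])

end DataConsistency

section ExtendedState

variable {l m : ℕ}

theorem sum_shift_indicator (f : ℕ → Fin m → ℝ) {k : ℕ} (hk : l ≤ k) (i : Fin l) (a : Fin m) :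
    (∑ j : Fin l, ∑ b, if a = b ∧ (i : ℕ) + 1 = j then f (k - l + j) b else 0)
      + (∑ b, if a = b ∧ (i : ℕ) + 1 = l then f k b else 0) = f (k + 1 - l + i) a := by
  simp only [ite_and, Finset.sum_ite_eq, Finset.mem_univ, if_true]
  rcases (Nat.succ_le_of_lt i.isLt).lt_or_eq with h | h
  · rw [Finset.sum_eq_single_of_mem ⟨i + 1, h⟩ (Finset.mem_univ _), if_pos rfl, if_neg h.ne,
      add_zero]
    · congr 1
      simp only
      omega
    · intro j _ hj
      exact if_neg fun e => hj (Fin.ext e.symm)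
  · rw [Finset.sum_eq_zero fun j _ => if_neg (by omega), if_pos h, zero_add]
    congr 1
    omega

theorem Kshift_mulVec (U Y : ℕ → Fin m → ℝ) {k : ℕ} (hk : l ≤ k) :
    Kshift l m *ᵥ Sum.elim (Sum.elim (xi l U Y k) (U k)) (Y k) = xi l U Y (k + 1) := by
  funext r
  rcases r with ⟨i, a⟩ | ⟨i, a⟩ <;>
  simpa only [mulVec, dotProduct, Fintype.sum_sum_type, Fintype.sum_prod_type, Kshift, of_apply,
    Sum.elim_inl, Sum.elim_inr, xi, ite_mul, one_mul, zero_mul, Finset.sum_const_zero, add_zero,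
    zero_add, and_comm (b := a = _)] using sum_shift_indicator _ hk i a

theorem Gmat_mulVec (U Y : ℕ → Fin m → ℝ) {k : ℕ} (hk : l ≤ k) :
    Gmat l m *ᵥ Sum.elim (Sum.elim (xi l U Y k) (U k)) (Y k)
      = Sum.elim (Sum.elim (xi l U Y k) (xi l U Y (k + 1))) (Sum.elim (U k) (Y k)) := by
  simp only [Gmat, fromRows_mulVec, fromCols_mulVec_sumElim, Kshift_mulVec U Y hk, one_mulVec,
    zero_mulVec, add_zero, zero_add]

theorem PhiMat_quadForm (P : Matrix (rindex l m) (rindex l m) ℝ) (Λ Ψ : Matrix (Fin m) (Fin m) ℝ)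
    (a b : rindex l m → ℝ) (c d : Fin m → ℝ) :
    Sum.elim (Sum.elim a b) (Sum.elim c d) ⬝ᵥ PhiMat P Λ Ψ *ᵥ Sum.elim (Sum.elim a b) (Sum.elim c d)
      = -(a ⬝ᵥ P *ᵥ a) + b ⬝ᵥ P *ᵥ b + (c ⬝ᵥ Λ *ᵥ c + d ⬝ᵥ Ψ *ᵥ d) := by
  simp [PhiMat, fromBlocks_mulVec, sumElim_dotProduct_sumElim, neg_mulVec]

/-- The matrix `(C̃, D̃) = (B₁ ⋯ B_l, −A₁ ⋯ −A_l, D)` of the difference-operator representation. -/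
def diffOpMat (Amats Bmats : Fin l → Matrix (Fin m) (Fin m) ℝ) (D : Matrix (Fin m) (Fin m) ℝ) :
    Matrix (Fin m) (rindex l m ⊕ Fin m) ℝ :=
  Matrix.of fun a c =>
    match c with
    | .inl (.inl (i, b)) => Bmats i a b
    | .inl (.inr (i, b)) => -Amats i a b
    | .inr b => D a b

theorem diffOpMat_mulVec_xi (Amats Bmats : Fin l → Matrix (Fin m) (Fin m) ℝ)
    (D : Matrix (Fin m) (Fin m) ℝ) (U Y : ℕ → Fin m → ℝ) (k : ℕ) :
    diffOpMat Amats Bmats D *ᵥ Sum.elim (xi l U Y k) (U k)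
      = -(∑ i : Fin l, Amats i *ᵥ Y (k - l + i)) + D *ᵥ U k
        + ∑ i : Fin l, Bmats i *ᵥ U (k - l + i) := by
  funext a
  simp only [mulVec, dotProduct, Fintype.sum_sum_type, Fintype.sum_prod_type, diffOpMat, of_apply,
    Sum.elim_inl, Sum.elim_inr, xi, Pi.add_apply, Pi.neg_apply, Finset.sum_apply, neg_mul,
    Finset.sum_neg_distrib]
  ring

theorem diffOpMat_mul_data {N mv : ℕ} {Amats Bmats : Fin l → Matrix (Fin m) (Fin m) ℝ}
    {D : Matrix (Fin m) (Fin m) ℝ} {Bv : Matrix (Fin m) (Fin mv) ℝ} {u y : ℕ → Fin m → ℝ}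
    {v : ℕ → Fin mv → ℝ}
    (hdata : ∀ k, l ≤ k → k < N →
      y k = -(∑ i : Fin l, Amats i *ᵥ y (k - l + i)) + D *ᵥ u k
        + ∑ i : Fin l, Bmats i *ᵥ u (k - l + i) + Bv *ᵥ v k) :
    diffOpMat Amats Bmats D * fromRows (XiMat l N u y) (UXi m l N u)
      = UXi m l N y - Bv * Matrix.of fun a (j : Fin (N - l)) => v (l + j) a := by
  ext a j
  have hcol : (fun c => fromRows (XiMat l N u y) (UXi m l N u) c j)
      = Sum.elim (xi l u y (l + j)) (u (l + j)) := by
    funext c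
    rcases c with c | c <;> rfl
  have hmul := congrFun (diffOpMat_mulVec_xi Amats Bmats D u y (l + j)) a
  rw [← hcol] at hmul
  rw [show (diffOpMat Amats Bmats D * fromRows (XiMat l N u y) (UXi m l N u)) a j
      = (diffOpMat Amats Bmats D *ᵥ fun c => fromRows (XiMat l N u y) (UXi m l N u) c j) a
      from rfl, hmul, Matrix.sub_apply, UXi, of_apply, hdata (l + j) le_self_add (by omega)]
  simp only [Pi.add_apply, mul_apply', of_apply]
  exact (add_sub_cancel_right _ _).symm

end ExtendedState

section Dissipation

variable {l m : ℕ} {Z : Matrix (Fin m) (rindex l m ⊕ Fin m) ℝ}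
  {Ω : Matrix ((rindex l m ⊕ Fin m) ⊕ Fin m) ((rindex l m ⊕ Fin m) ⊕ Fin m) ℝ}
  {P : Matrix (rindex l m) (rindex l m) ℝ} {γ μ : ℝ}

theorem dissipation_inequality (hμ : 0 ≤ μ)
    (hLMI : IsNegSemidef ((Gmat l m)ᵀ * PhiMat P ((-(γ ^ 2)) • (1 : Matrix (Fin m) (Fin m) ℝ)) 1
      * Gmat l m - μ • Ω))
    (hgraph : ∀ ζ, Sum.elim ζ (Z *ᵥ ζ) ⬝ᵥ Ω *ᵥ Sum.elim ζ (Z *ᵥ ζ) ≤ 0)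
    {U Y : ℕ → Fin m → ℝ} {k : ℕ} (hk : l ≤ k) (hY : Y k = Z *ᵥ Sum.elim (xi l U Y k) (U k)) :
    Y k ⬝ᵥ Y k - γ ^ 2 * (U k ⬝ᵥ U k)
      ≤ xi l U Y k ⬝ᵥ P *ᵥ xi l U Y k - xi l U Y (k + 1) ⬝ᵥ P *ᵥ xi l U Y (k + 1) := by
  set g := Sum.elim (Sum.elim (xi l U Y k) (U k)) (Y k)
  have hLMIg := hLMI.2 g
  have hgraphg : g ⬝ᵥ Ω *ᵥ g ≤ 0 := by
    simpa only [g, ← hY] using hgraph (Sum.elim (xi l U Y k) (U k))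
  rw [sub_mulVec, dotProduct_sub, smul_mulVec, dotProduct_smul, smul_eq_mul,
    ← mulVec_mulVec, ← mulVec_mulVec, ← dotProduct_transpose_mulVec, transpose_transpose,
    Gmat_mulVec U Y hk, dotProduct_comm, PhiMat_quadForm] at hLMIg
  simp only [smul_mulVec, one_mulVec, dotProduct_smul, smul_eq_mul] at hLMIg
  linarith [mul_nonneg hμ (neg_nonneg.2 hgraphg)]

theorem sum_dotProduct_le_of_lmi (hP : IsPosSemidefR P) (hμ : 0 ≤ μ)
    (hLMI : IsNegSemidef ((Gmat l m)ᵀ * PhiMat P ((-(γ ^ 2)) • (1 : Matrix (Fin m) (Fin m) ℝ)) 1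
      * Gmat l m - μ • Ω))
    (hgraph : ∀ ζ, Sum.elim ζ (Z *ᵥ ζ) ⬝ᵥ Ω *ᵥ Sum.elim ζ (Z *ᵥ ζ) ≤ 0)
    {U Y : ℕ → Fin m → ℝ} (hzero : ∀ k < l, U k = 0 ∧ Y k = 0)
    (hY : ∀ k, l ≤ k → Y k = Z *ᵥ Sum.elim (xi l U Y k) (U k)) (K : ℕ) :
    ∑ k ∈ Finset.range K, Y (l + k) ⬝ᵥ Y (l + k)
      ≤ γ ^ 2 * ∑ k ∈ Finset.range K, U (l + k) ⬝ᵥ U (l + k) := by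
  have hξ : xi l U Y l = 0 := by
    funext r
    rcases r with ⟨i, a⟩ | ⟨i, a⟩ <;>
      simp [xi, (hzero i i.isLt).1, (hzero i i.isLt).2]
  have htele := sum_range_nonpos_of_le_sub_succ
    (f := fun k => Y (l + k) ⬝ᵥ Y (l + k) - γ ^ 2 * (U (l + k) ⬝ᵥ U (l + k)))
    (V := fun k => xi l U Y (l + k) ⬝ᵥ P *ᵥ xi l U Y (l + k)) (by simp [hξ])
    (fun k => hP.2 _)
    (fun k => dissipation_inequality hμ hLMI hgraph le_self_add (hY _ le_self_add)) K
  rw [Finset.sum_sub_distrib, ← Finset.mul_sum] at htele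
  linarith

end Dissipation

theorem act_mul {a b c : ℕ} (M : Matrix (Fin a) (Fin b) ℝ) (N : Matrix (Fin b) (Fin c) ℝ)
    (v : Evec c) : act (M * N) v = act M (act N v) := by
  have : (M * N).map Complex.ofReal = M.map Complex.ofReal * N.map Complex.ofReal :=
    Matrix.map_mul (f := Complex.ofRealHom)
  simp [act, this]

theorem act_zero {a b : ℕ} (M : Matrix (Fin a) (Fin b) ℝ) : act M 0 = 0 := map_zero _

theorem act_sum {a b : ℕ} {ι : Type*} (M : Matrix (Fin a) (Fin b) ℝ) (s : Finset ι)
    (v : ι → Evec b) : act M (∑ i ∈ s, v i) = ∑ i ∈ s, act M (v i) := map_sum _ _ _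

def realCoords {m : ℕ} (f : ℂ →ₗ[ℝ] ℝ) : Evec m →ₗ[ℝ] (Fin m → ℝ) :=
  LinearMap.compLeft f (Fin m) ∘ₗ (WithLp.linearEquiv 2 ℝ (Fin m → ℂ)).toLinearMap

theorem realCoords_apply {m : ℕ} (f : ℂ →ₗ[ℝ] ℝ) (w : Evec m) (a : Fin m) :
    realCoords f w a = f (w a) := rfl

theorem realCoords_act {a b : ℕ} (f : ℂ →ₗ[ℝ] ℝ) (M : Matrix (Fin a) (Fin b) ℝ) (w : Evec b) :
    realCoords f (act M w) = M *ᵥ realCoords f w := by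
  funext i
  simp [realCoords_apply, act, toLpLin_apply, mulVec, dotProduct, map_sum, ← Complex.real_smul]

theorem norm_sq_eq_realCoords {m : ℕ} (w : Evec m) :
    ‖w‖ ^ 2 = realCoords Complex.reLm w ⬝ᵥ realCoords Complex.reLm w
      + realCoords Complex.imLm w ⬝ᵥ realCoords Complex.imLm w := by
  simp [EuclideanSpace.norm_sq_eq, dotProduct, realCoords_apply, ← Finset.sum_add_distrib,
    Complex.sq_norm, Complex.normSq_apply]

section Trajectory

variable {n m l : ℕ} (A : Matrix (Fin n) (Fin n) ℝ) (B : Matrix (Fin n) (Fin m) ℝ)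
  (C : Matrix (Fin m) (Fin n) ℝ) (D : Matrix (Fin m) (Fin m) ℝ)

def stateSeq (u : ℕ → Evec m) (k : ℕ) : Evec n :=
  ∑ i ∈ Finset.range k, act (A ^ (k - 1 - i) * B) (u i)

theorem stateSeq_succ (u : ℕ → Evec m) (k : ℕ) :
    stateSeq A B u (k + 1) = act A (stateSeq A B u k) + act B (u k) := by
  simp only [stateSeq, Finset.sum_range_succ, Nat.add_sub_cancel, Nat.sub_self, pow_zero,
    Matrix.one_mul, act_sum]
  congr 1
  refine Finset.sum_congr rfl fun i hi => ?_
  rw [Finset.mem_range] at hi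
  rw [show k - i = k - 1 - i + 1 by omega, pow_succ', Matrix.mul_assoc, act_mul]

theorem output_eq_act_stateSeq (u : ℕ → Evec m) (k : ℕ) :
    output A B C D u k = act C (stateSeq A B u k) + act D (u k) := by
  simp only [output, stateSeq, act_sum, ← act_mul, Matrix.mul_assoc]
  exact add_comm _ _

def delay (l : ℕ) (u : ℕ → Evec m) (k : ℕ) : Evec m := if k < l then 0 else u (k - l)

theorem delay_of_lt (u : ℕ → Evec m) {k : ℕ} (hk : k < l) : delay l u k = 0 := if_pos hk

theorem delay_add (l k : ℕ) (u : ℕ → Evec m) : delay l u (l + k) = u k := by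
  simp [delay]

theorem output_delay_of_lt (u : ℕ → Evec m) {k : ℕ} (hk : k < l) :
    output A B C D (delay l u) k = 0 := by
  rw [output, delay_of_lt u hk, act_zero, zero_add]
  exact Finset.sum_eq_zero fun i hi => by
    rw [delay_of_lt u ((Finset.mem_range.1 hi).trans hk), act_zero]

theorem output_delay_add (l k : ℕ) (u : ℕ → Evec m) :
    output A B C D (delay l u) (l + k) = output A B C D u k := by
  rw [output, output, delay_add, Finset.sum_range_add,
    Finset.sum_eq_zero fun i hi => by rw [delay_of_lt u (Finset.mem_range.1 hi), act_zero],
    zero_add]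
  refine congrArg _ (Finset.sum_congr rfl fun i _ => ?_)
  rw [delay_add, show l + k - 1 - (l + i) = k - 1 - i by omega]

def HasDiffOpRep (Amats Bmats : Fin l → Matrix (Fin m) (Fin m) ℝ) : Prop :=
  ∀ (x : ℕ → Evec n) (uc yc : ℕ → Evec m),
    (∀ k, x (k + 1) = act A (x k) + act B (uc k)) →
    (∀ k, yc k = act C (x k) + act D (uc k)) →
    ∀ k, l ≤ k →
      yc k = -(∑ i : Fin l, act (Amats i) (yc (k - l + (i : ℕ))))
        + act D (uc k) + ∑ i : Fin l, act (Bmats i) (uc (k - l + (i : ℕ)))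

end Trajectory

theorem realCoords_diffOp {l m : ℕ} (f : ℂ →ₗ[ℝ] ℝ)
    (Amats Bmats : Fin l → Matrix (Fin m) (Fin m) ℝ) (D : Matrix (Fin m) (Fin m) ℝ)
    {uc yc : ℕ → Evec m} {k : ℕ}
    (h : yc k = -(∑ i : Fin l, act (Amats i) (yc (k - l + i))) + act D (uc k)
      + ∑ i : Fin l, act (Bmats i) (uc (k - l + i))) :
    (realCoords f ∘ yc) k = diffOpMat Amats Bmats D
      *ᵥ Sum.elim (xi l (realCoords f ∘ uc) (realCoords f ∘ yc) k) ((realCoords f ∘ uc) k) := by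
  rw [diffOpMat_mulVec_xi, Function.comp_apply, h]
  simp only [map_add, map_neg, map_sum, realCoords_act]
  rfl

theorem sum_norm_sq_output_le_of_lmi {n m l : ℕ} {A : Matrix (Fin n) (Fin n) ℝ}
    {B : Matrix (Fin n) (Fin m) ℝ} {C : Matrix (Fin m) (Fin n) ℝ} {D : Matrix (Fin m) (Fin m) ℝ}
    {Amats Bmats : Fin l → Matrix (Fin m) (Fin m) ℝ} (hdiff : HasDiffOpRep A B C D Amats Bmats)
    {Ω : Matrix ((rindex l m ⊕ Fin m) ⊕ Fin m) ((rindex l m ⊕ Fin m) ⊕ Fin m) ℝ}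
    {P : Matrix (rindex l m) (rindex l m) ℝ} {γ μ : ℝ} (hP : IsPosSemidefR P) (hμ : 0 ≤ μ)
    (hLMI : IsNegSemidef ((Gmat l m)ᵀ * PhiMat P ((-(γ ^ 2)) • (1 : Matrix (Fin m) (Fin m) ℝ)) 1
      * Gmat l m - μ • Ω))
    (hgraph : ∀ ζ, Sum.elim ζ (diffOpMat Amats Bmats D *ᵥ ζ) ⬝ᵥ Ω
      *ᵥ Sum.elim ζ (diffOpMat Amats Bmats D *ᵥ ζ) ≤ 0)
    (u : ℕ → Evec m) (K : ℕ) :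
    ∑ k ∈ Finset.range K, ‖output A B C D u k‖ ^ 2 ≤ γ ^ 2 * ∑ k ∈ Finset.range K, ‖u k‖ ^ 2 := by
  set U := fun f : ℂ →ₗ[ℝ] ℝ => realCoords f ∘ delay l u
  set Y := fun f : ℂ →ₗ[ℝ] ℝ => realCoords f ∘ output A B C D (delay l u)
  have hde := hdiff _ _ _ (stateSeq_succ A B (delay l u)) (output_eq_act_stateSeq A B C D _)
  have hcoord (f : ℂ →ₗ[ℝ] ℝ) := sum_dotProduct_le_of_lmi hP hμ hLMI hgraph (U := U f) (Y := Y f)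
    (fun k hk => ⟨by simp [U, delay_of_lt u hk], by simp [Y, output_delay_of_lt A B C D u hk]⟩)
    (fun k hk => realCoords_diffOp f Amats Bmats D (hde k hk)) K
  have hy (k : ℕ) : ‖output A B C D u k‖ ^ 2
      = Y Complex.reLm (l + k) ⬝ᵥ Y Complex.reLm (l + k)
        + Y Complex.imLm (l + k) ⬝ᵥ Y Complex.imLm (l + k) := by
    rw [norm_sq_eq_realCoords, ← output_delay_add A B C D l k u]
    rfl
  have hu (k : ℕ) : ‖u k‖ ^ 2
      = U Complex.reLm (l + k) ⬝ᵥ U Complex.reLm (l + k)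
        + U Complex.imLm (l + k) ⬝ᵥ U Complex.imLm (l + k) := by
    rw [norm_sq_eq_realCoords, ← delay_add l k u]
    rfl
  simp only [hy, hu, Finset.sum_add_distrib]
  linarith [hcoord Complex.reLm, hcoord Complex.imLm]

theorem enorm2_le_mul_of_sum_sq_le {m : ℕ} {γ : ℝ} (hγ : 0 ≤ γ) {f g : ℕ → Evec m}
    (h : ∀ K, ∑ k ∈ Finset.range K, ‖f k‖ ^ 2 ≤ γ ^ 2 * ∑ k ∈ Finset.range K, ‖g k‖ ^ 2) :
    enorm2 f ≤ ENNReal.ofReal γ * enorm2 g := by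
  have hsq : ∀ x : Evec m, ENNReal.ofReal (‖x‖ ^ 2) = (‖x‖₊ : ℝ≥0∞) ^ 2 := fun x => by
    rw [ENNReal.ofReal_pow (norm_nonneg _), ← coe_nnnorm, ENNReal.ofReal_coe_nnreal]
  have htsum : ∑' k, (‖f k‖₊ : ℝ≥0∞) ^ 2 ≤ ENNReal.ofReal γ ^ 2 * ∑' k, (‖g k‖₊ : ℝ≥0∞) ^ 2 := by
    rw [ENNReal.tsum_eq_iSup_nat, ENNReal.tsum_eq_iSup_nat, ENNReal.mul_iSup]
    refine iSup_mono fun K => ?_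
    have := ENNReal.ofReal_le_ofReal (h K)
    rw [ENNReal.ofReal_mul (by positivity), ENNReal.ofReal_pow hγ,
      ENNReal.ofReal_sum_of_nonneg fun _ _ => by positivity,
      ENNReal.ofReal_sum_of_nonneg fun _ _ => by positivity] at this
    simpa only [hsq] using this
  calc enorm2 f ≤ (ENNReal.ofReal γ ^ 2 * ∑' k, (‖g k‖₊ : ℝ≥0∞) ^ 2) ^ (1 / 2 : ℝ) :=
        ENNReal.rpow_le_rpow htsum (by norm_num)
    _ = ENNReal.ofReal γ * enorm2 g := by
        rw [ENNReal.mul_rpow_of_nonneg _ _ (by norm_num), ← ENNReal.rpow_natCast,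
          ← ENNReal.rpow_mul, enorm2]
        norm_num

theorem norm_TtauMap_le {n m : ℕ} (A : Matrix (Fin n) (Fin n) ℝ) (B : Matrix (Fin n) (Fin m) ℝ)
    (C : Matrix (Fin m) (Fin n) ℝ) (D : Matrix (Fin m) (Fin m) ℝ) (τ : ℕ) (u : ℕ → Evec m)
    (k : ℕ) : ‖TtauMap A B C D τ u k‖ ≤ ‖output A B C D u k‖ := by
  unfold TtauMap
  split_ifs <;> simp

theorem maxGain_TtauMap_le {n m : ℕ} {A : Matrix (Fin n) (Fin n) ℝ} {B : Matrix (Fin n) (Fin m) ℝ}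
    {C : Matrix (Fin m) (Fin n) ℝ} {D : Matrix (Fin m) (Fin m) ℝ} {γ : ℝ} (hγ : 0 ≤ γ)
    (h : ∀ u K, ∑ k ∈ Finset.range K, ‖output A B C D u k‖ ^ 2
      ≤ γ ^ 2 * ∑ k ∈ Finset.range K, ‖u k‖ ^ 2)
    (dom : Set (ℕ → Evec m)) (τ : ℕ) : maxGain dom (TtauMap A B C D τ) ≤ ENNReal.ofReal γ :=
  iSup₂_le fun u _ => ENNReal.div_le_of_le_mul <| enorm2_le_mul_of_sum_sq_le hγ fun K =>
    (Finset.sum_le_sum fun k _ => pow_le_pow_left₀ (norm_nonneg _)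
      (norm_TtauMap_le A B C D τ u k) 2).trans (h u K)

theorem stmt15_general {n m mv : ℕ}
    (A : Matrix (Fin n) (Fin n) ℝ) (B : Matrix (Fin n) (Fin m) ℝ)
    (C : Matrix (Fin m) (Fin n) ℝ) (D : Matrix (Fin m) (Fin m) ℝ)
    (l N : ℕ)
    (Amats Bmats : Fin l → Matrix (Fin m) (Fin m) ℝ)
    -- the true system admits the difference-operator representation
    -- y_k = −A_l y_{k-1} − ⋯ − A_1 y_{k-l} + D u_k + B_l u_{k-1} + ⋯ + B_1 u_{k-l}:
    (hdiff : ∀ (x : ℕ → Evec n) (uc yc : ℕ → Evec m),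
      (∀ k, x (k + 1) = act A (x k) + act B (uc k)) →
      (∀ k, yc k = act C (x k) + act D (uc k)) →
      ∀ k, l ≤ k →
        yc k = -(∑ i : Fin l, act (Amats i) (yc (k - l + (i : ℕ))))
          + act D (uc k) + ∑ i : Fin l, act (Bmats i) (uc (k - l + (i : ℕ))))
    (Bv : Matrix (Fin m) (Fin mv) ℝ)
    (Q : Matrix (Fin (N - l)) (Fin (N - l)) ℝ) (S : Matrix (Fin (N - l)) (Fin mv) ℝ)
    (R : Matrix (Fin mv) (Fin mv) ℝ) (hQ : IsNegDef Q)
    (u y : ℕ → Fin m → ℝ) (v : ℕ → Fin mv → ℝ)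
    -- the measured data is generated by the true system corrupted by the noise v:
    (hdata : ∀ k, l ≤ k → k < N →
      y k = -(∑ i : Fin l, (Amats i).mulVec (y (k - l + (i : ℕ))))
        + D.mulVec (u k) + (∑ i : Fin l, (Bmats i).mulVec (u (k - l + (i : ℕ))))
        + Bv.mulVec (v k))
    -- the noise matrix V* = (v_l ⋯ v_{N-1}) belongs to 𝒱:
    (hV : inNoiseSet Q S R (Matrix.of fun a (j : Fin (N - l)) => v (l + (j : ℕ)) a))
    (hinvQSR : IsUnit (QSRbar l N u y Q S R Bv).det)
    (γ : ℝ) (hγ : 0 ≤ γ)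
    (P : Matrix (rindex l m) (rindex l m) ℝ) (hP : IsPosSemidefR P) (μ : ℝ) (hμ : 0 ≤ μ)
    (hLMI : IsNegSemidef
      ((Gmat l m)ᵀ * PhiMat P ((-(γ ^ 2)) • (1 : Matrix (Fin m) (Fin m) ℝ)) 1 * Gmat l m
        - μ • (QSRbar l N u y Q S R Bv)⁻¹)) :
    ∀ L : ℝ≥0∞,
      Tendsto (fun τ : ℕ => maxGain (ltwoTau m (τ + 1)) (TtauMap A B C D (τ + 1))) atTop (𝓝 L) →
        L ≤ ENNReal.ofReal γ := by
  intro L hL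
  have hgraph := graph_dotProduct_QSRbarOf_inv_mulVec_nonpos hQ.1 hQ.dotProduct_mulVec_nonpos hV
    (diffOpMat_mul_data hdata) hinvQSR
  exact le_of_tendsto' hL fun τ =>
    maxGain_TtauMap_le hγ (sum_norm_sq_output_le_of_lmi hdiff hP hμ hLMI hgraph) _ _

/-- Robust data-driven upper bound on `lim_{τ→∞} Γ(T^τ)` from noisy data. -/
theorem stmt15 {n m mv : ℕ} (hn : 1 ≤ n) (hm : 1 ≤ m) (hmv : 1 ≤ mv)
    (A : Matrix (Fin n) (Fin n) ℝ) (B : Matrix (Fin n) (Fin m) ℝ)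
    (C : Matrix (Fin m) (Fin n) ℝ) (D : Matrix (Fin m) (Fin m) ℝ)
    (l N : ℕ) (hl : 1 ≤ l) (hN : 1 ≤ N) (hlag : lag A C ≤ l)
    (Amats Bmats : Fin l → Matrix (Fin m) (Fin m) ℝ)
    -- the true system admits the difference-operator representation
    -- y_k = −A_l y_{k-1} − ⋯ − A_1 y_{k-l} + D u_k + B_l u_{k-1} + ⋯ + B_1 u_{k-l}:
    (hdiff : ∀ (x : ℕ → Evec n) (uc yc : ℕ → Evec m),
      (∀ k, x (k + 1) = act A (x k) + act B (uc k)) →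
      (∀ k, yc k = act C (x k) + act D (uc k)) →
      ∀ k, l ≤ k →
        yc k = -(∑ i : Fin l, act (Amats i) (yc (k - l + (i : ℕ))))
          + act D (uc k) + ∑ i : Fin l, act (Bmats i) (uc (k - l + (i : ℕ))))
    (Bv : Matrix (Fin m) (Fin mv) ℝ)
    (Q : Matrix (Fin (N - l)) (Fin (N - l)) ℝ) (S : Matrix (Fin (N - l)) (Fin mv) ℝ)
    (R : Matrix (Fin mv) (Fin mv) ℝ) (hQ : IsNegDef Q) (hR : R.IsSymm)
    (u y : ℕ → Fin m → ℝ) (v : ℕ → Fin mv → ℝ)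
    -- the measured data is generated by the true system corrupted by the noise v:
    (hdata : ∀ k, l ≤ k → k < N →
      y k = -(∑ i : Fin l, (Amats i).mulVec (y (k - l + (i : ℕ))))
        + D.mulVec (u k) + (∑ i : Fin l, (Bmats i).mulVec (u (k - l + (i : ℕ))))
        + Bv.mulVec (v k))
    -- the noise matrix V* = (v_l ⋯ v_{N-1}) belongs to 𝒱:
    (hV : inNoiseSet Q S R (Matrix.of fun a (j : Fin (N - l)) => v (l + (j : ℕ)) a))
    (hinvQSR : IsUnit (QSRbar l N u y Q S R Bv).det)
    (γ : ℝ) (hγ : 0 ≤ γ)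
    (P : Matrix (rindex l m) (rindex l m) ℝ) (hP : IsPosSemidefR P) (μ : ℝ) (hμ : 0 ≤ μ)
    (hLMI : IsNegSemidef
      ((Gmat l m)ᵀ * PhiMat P ((-(γ ^ 2)) • (1 : Matrix (Fin m) (Fin m) ℝ)) 1 * Gmat l m
        - μ • (QSRbar l N u y Q S R Bv)⁻¹)) :
    ∀ L : ℝ≥0∞,
      Tendsto (fun τ : ℕ => maxGain (ltwoTau m (τ + 1)) (TtauMap A B C D (τ + 1))) atTop (𝓝 L) →
        L ≤ ENNReal.ofReal γ :=
  stmt15_general A B C D l N Amats Bmats hdiff Bv Q S R hQ u y v hdata hV hinvQSR γ hγ P hP μ hμ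
    hLMI

end
end
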